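/- arXiv:1604.04023 — 11 statements merged into one kernel-verified Lean document; each statement's English description precedes it below -/
import Mathlib

section
/- Let q be a power of a prime, let n ≥ 2, let ζ be a primitive element of F_{q^n}, let F : F_{q^n} → F_{q^n}, let f : Z/(q^n−1)Z → F_{q^n} be defined by f(k) = F(ζ^k), and let r be the least period of the DFT F_ζ[f]. If r does not divide (q^n−1)/Φ_n(q), then the support of F contains an element of degree n over F_q. -/
open scoped Classical

noncomputable section

/-- `g` is `r`-periodic on `Z/NZ`. -/
def IsPeriodOf {N : ℕ} {α : Type*} (g : ZMod N → α) (r : ℕ) : Prop :=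
  ∀ m : ZMod N, g (m + (r : ZMod N)) = g m

/-- `r` is the least period of `g`. -/
def IsLeastPeriod {N : ℕ} {α : Type*} (g : ZMod N → α) (r : ℕ) : Prop :=
  0 < r ∧ IsPeriodOf g r ∧ ∀ s : ℕ, 0 < s → IsPeriodOf g s → r ≤ s

/-- The discrete Fourier transform based on `ζ`:
`F_ζ[f](m) = ∑_{j ∈ Z/NZ} f(j) ζ^{mj}`. -/
def dft {F : Type*} [CommRing F] {N : ℕ} [NeZero N] (ζ : F) (f : ZMod N → F) :
    ZMod N → F :=
  fun m => ∑ j : ZMod N, f j * ζ ^ (m.val * j.val)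

lemma aux_pow_card_deg {Fq Fqn : Type} [Field Fq] [Fintype Fq] [Field Fqn] [Fintype Fqn]
    [Algebra Fq Fqn] (ξ : Fqn) :
    ξ ^ (Fintype.card Fq ^ (minpoly Fq ξ).natDegree) = ξ := by
  have hint : IsIntegral Fq ξ := IsIntegral.of_finite Fq ξ
  set L := IntermediateField.adjoin Fq ({ξ} : Set Fqn) with hL
  haveI : Fintype L := Fintype.ofFinite L
  have hcard : Fintype.card L = Fintype.card Fq ^ (minpoly Fq ξ).natDegree := by
    rw [Module.card_eq_pow_finrank (K := Fq) (V := L), IntermediateField.adjoin.finrank hint]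
  have hx : (IntermediateField.AdjoinSimple.gen Fq ξ) ^ (Fintype.card L)
      = IntermediateField.AdjoinSimple.gen Fq ξ := FiniteField.pow_card _
  have := congrArg (fun y : L => (y : Fqn)) hx
  simpa [hcard] using this

lemma aux_deg_dvd {Fq Fqn : Type} [Field Fq] [Fintype Fq] [Field Fqn] [Fintype Fqn]
    [Algebra Fq Fqn] (ξ : Fqn) :
    (minpoly Fq ξ).natDegree ∣ Module.finrank Fq Fqn := by
  have hint : IsIntegral Fq ξ := IsIntegral.of_finite Fq ξ
  rw [← IntermediateField.adjoin.finrank hint]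
  exact ⟨Module.finrank (IntermediateField.adjoin Fq ({ξ} : Set Fqn)) Fqn,
    (Module.finrank_mul_finrank Fq _ Fqn).symm⟩

lemma aux_pow_modEq {F : Type*} [Monoid F] {N : ℕ} {ζ : F} (hζ : ζ ^ N = 1)
    {a b : ℕ} (hab : a ≡ b [MOD N]) : ζ ^ a = ζ ^ b := by
  have ha : ζ ^ a = ζ ^ (a % N) := by
    conv_lhs => rw [← Nat.div_add_mod a N]
    rw [pow_add, pow_mul, hζ, one_pow, one_mul]
  have hb : ζ ^ b = ζ ^ (b % N) := by
    conv_lhs => rw [← Nat.div_add_mod b N]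
    rw [pow_add, pow_mul, hζ, one_pow, one_mul]
  rw [ha, hb, hab]

/-- Lemma 1.2 (i): if the least period `r` of `F_ζ[f]` does not divide
`(q^n - 1)/Φ_n(q)`, then `supp F` contains an element of degree `n` over `F_q`. -/
theorem supp_contains_degree_n_of_leastPeriod_not_dvd
    (q n : ℕ) (hn : 2 ≤ n)
    (Fq Fqn : Type) [Field Fq] [Fintype Fq] [Field Fqn] [Fintype Fqn]
    [Algebra Fq Fqn]
    (hq : Fintype.card Fq = q) (hqn : Fintype.card Fqn = q ^ n)
    [NeZero (q ^ n - 1)]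
    (ζ : Fqn) (hζ : orderOf ζ = q ^ n - 1)
    (F : Fqn → Fqn) (f : ZMod (q ^ n - 1) → Fqn)
    (hf : ∀ k : ZMod (q ^ n - 1), f k = F (ζ ^ k.val))
    (r : ℕ) (hr : IsLeastPeriod (dft ζ f) r)
    (hdvd : ¬ r ∣ (q ^ n - 1) / ((Polynomial.cyclotomic n ℤ).eval (q : ℤ)).toNat) :
    ∃ ξ : Fqn, F ξ ≠ 0 ∧ (minpoly Fq ξ).natDegree = n := by
  by_contra hcon
  push_neg at hcon
  have hq2 : 2 ≤ q := hq ▸ Fintype.one_lt_card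
  have hqn1 : 1 ≤ q ^ n := Nat.one_le_pow _ _ (by omega)
  have hNpos : 0 < (q ^ n - 1) := Nat.pos_of_ne_zero (NeZero.ne _)
  have hζN : ζ ^ (q ^ n - 1) = 1 := hζ ▸ pow_orderOf_eq_one ζ
  have hζ0 : ζ ≠ 0 := by
    intro h
    rw [h, zero_pow hNpos.ne'] at hζN
    exact zero_ne_one hζN
  -- finrank
  have hrank : Module.finrank Fq Fqn = n := by
    have hc := Module.card_eq_pow_finrank (K := Fq) (V := Fqn)
    rw [hq, hqn] at hc
    exact Nat.pow_right_injective hq2 hc.symm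
  -- integer cyclotomic computation
  set Φ : ℤ := (Polynomial.cyclotomic n ℤ).eval (q : ℤ) with hΦ
  have hq1Z : (1 : ℤ) < (q : ℤ) := by exact_mod_cast hq2
  have hΦpos : 0 < Φ := Polynomial.cyclotomic_pos' n hq1Z
  set P : ℤ := ∏ e ∈ n.divisors.erase n, (Polynomial.cyclotomic e ℤ).eval (q : ℤ) with hP
  have hPpos : 0 < P := Finset.prod_pos fun e _ => Polynomial.cyclotomic_pos' e hq1Z
  have hprod : ∀ m : ℕ, 0 < m →
      (∏ e ∈ m.divisors, (Polynomial.cyclotomic e ℤ).eval (q : ℤ)) = (q : ℤ) ^ m - 1 := by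
    intro m hm
    rw [← Polynomial.eval_prod, Polynomial.prod_cyclotomic_eq_X_pow_sub_one hm ℤ]
    simp
  have hNZ : (q : ℤ) ^ n - 1 = Φ * P := by
    rw [← hprod n (by omega), ← Finset.mul_prod_erase n.divisors _
      (Nat.mem_divisors_self n (by omega))]
  set M : ℕ := P.toNat with hM
  have hMP : (M : ℤ) = P := Int.toNat_of_nonneg hPpos.le
  have hNcast : ((q ^ n - 1) : ℤ) = (q : ℤ) ^ n - 1 := by
    push_cast [hqn1]; ring
  have hNM : (q ^ n - 1) = Φ.toNat * M := by
    have : ((q ^ n - 1) : ℤ) = (Φ.toNat * M : ℕ) := by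
      push_cast
      rw [hMP, Int.toNat_of_nonneg hΦpos.le, hNcast, hNZ]
    exact_mod_cast this
  have hdiv : (q ^ n - 1) / Φ.toNat = M := by
    rw [hNM, Nat.mul_div_cancel_left _ (by omega : 0 < Φ.toNat)]
  rw [hdiv] at hdvd
  -- key divisibility: q^d - 1 ∣ M for proper divisors d of n
  have key : ∀ d : ℕ, d ∣ n → d ≠ n → 0 < d → (q ^ d - 1) ∣ M := by
    intro d hdn hdne hdpos
    have hsub : d.divisors ⊆ n.divisors.erase n := by
      intro e he
      rw [Nat.mem_divisors] at he
      rw [Finset.mem_erase, Nat.mem_divisors]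
      refine ⟨?_, he.1.trans hdn, by omega⟩
      have hed : e ≤ d := Nat.le_of_dvd hdpos he.1
      have hdln : d < n := lt_of_le_of_ne (Nat.le_of_dvd (by omega) hdn) hdne
      omega
    have hZ : ((q : ℤ) ^ d - 1) ∣ P := by
      rw [← hprod d hdpos]
      exact Finset.prod_dvd_prod_of_subset _ _ _ hsub
    have hcast : ((q ^ d - 1 : ℕ) : ℤ) = (q : ℤ) ^ d - 1 := by
      push_cast [Nat.one_le_pow d q (by omega)]; ring
    have : ((q ^ d - 1 : ℕ) : ℤ) ∣ (M : ℤ) := by rw [hcast, hMP]; exact hZ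
    exact_mod_cast this
  -- M is a period of the DFT
  obtain ⟨hrpos, hrper, hrmin⟩ := hr
  have hMper : IsPeriodOf (dft ζ f) M := by
    intro m
    unfold dft
    apply Finset.sum_congr rfl
    intro j _
    by_cases hj : f j = 0
    · rw [hj, zero_mul, zero_mul]
    · congr 1
      -- show ζ ^ ((m + M).val * j.val) = ζ ^ (m.val * j.val)
      have hξ : F (ζ ^ j.val) ≠ 0 := by rw [← hf j]; exact hj
      set ξ := ζ ^ j.val with hξdef
      set d := (minpoly Fq ξ).natDegree with hd
      have hdn : d ∣ n := hrank ▸ aux_deg_dvd (Fq := Fq) ξ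
      have hdne : d ≠ n := hcon ξ hξ
      have hdpos : 0 < d := minpoly.natDegree_pos (IsIntegral.of_finite Fq ξ)
      have h1 : ξ ^ (q ^ d) = ξ := by
        have := aux_pow_card_deg (Fq := Fq) ξ
        rwa [hq] at this
      have hξ0 : ξ ≠ 0 := pow_ne_zero _ hζ0
      have h2 : ξ ^ (q ^ d - 1) = 1 := by
        have hstep : ξ ^ (q ^ d - 1) * ξ = 1 * ξ := by
          rw [one_mul, ← pow_succ, Nat.sub_add_cancel (Nat.one_le_pow d q (by omega)), h1]
        exact mul_right_cancel₀ hξ0 hstep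
      obtain ⟨c, hc⟩ := key d hdn hdne hdpos
      have h3 : ζ ^ (M * j.val) = 1 := by
        rw [hc, show (q ^ d - 1) * c * j.val = j.val * (q ^ d - 1) * c by ring,
          pow_mul, pow_mul, ← hξdef, h2, one_pow]
      have hmod : (m + (M : ZMod (q ^ n - 1))).val * j.val ≡ (m.val + M) * j.val [MOD (q ^ n - 1)] := by
        apply Nat.ModEq.mul_right
        calc (m + (M : ZMod (q ^ n - 1))).val = (m.val + (M : ZMod (q ^ n - 1)).val) % (q ^ n - 1) := ZMod.val_add m _
          _ ≡ m.val + (M : ZMod (q ^ n - 1)).val [MOD (q ^ n - 1)] := Nat.mod_modEq _ _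
          _ = m.val + M % (q ^ n - 1) := by rw [ZMod.val_natCast]
          _ ≡ m.val + M [MOD (q ^ n - 1)] := Nat.ModEq.add_left _ (Nat.mod_modEq _ _)
      calc ζ ^ ((m + (M : ZMod (q ^ n - 1))).val * j.val)
          = ζ ^ ((m.val + M) * j.val) := aux_pow_modEq hζN hmod
        _ = ζ ^ (m.val * j.val) * ζ ^ (M * j.val) := by rw [← pow_add]; ring_nf
        _ = ζ ^ (m.val * j.val) := by rw [h3, mul_one]
  -- the set of periods is an additive subgroup
  set g := dft ζ f with hg
  let S : AddSubgroup (ZMod (q ^ n - 1)) :=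
    { carrier := {c | ∀ m, g (m + c) = g m}
      zero_mem' := by intro m; rw [add_zero]
      add_mem' := by
        intro a b ha hb m
        rw [← add_assoc, hb (m + a), ha m]
      neg_mem' := by
        intro a ha m
        have := ha (m + -a)
        simpa using this.symm }
  have hrS : ((r : ℕ) : ZMod (q ^ n - 1)) ∈ S := hrper
  have hMS : ((M : ℕ) : ZMod (q ^ n - 1)) ∈ S := hMper
  set G := Nat.gcd r M with hG
  have hGpos : 0 < G := Nat.gcd_pos_of_pos_left M hrpos
  have hGS : ((G : ℕ) : ZMod (q ^ n - 1)) ∈ S := by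
    have hbez : (G : ℤ) = r * Nat.gcdA r M + M * Nat.gcdB r M := Nat.gcd_eq_gcd_ab r M
    have : ((G : ℕ) : ZMod (q ^ n - 1)) = Nat.gcdA r M • ((r : ℕ) : ZMod (q ^ n - 1))
        + Nat.gcdB r M • ((M : ℕ) : ZMod (q ^ n - 1)) := by
      have := congrArg (fun z : ℤ => (z : ZMod (q ^ n - 1))) hbez
      push_cast at this
      rw [zsmul_eq_mul, zsmul_eq_mul]
      rw [this]; ring
    rw [this]
    exact S.add_mem (S.zsmul_mem hrS _) (S.zsmul_mem hMS _)
  have hGper : IsPeriodOf g G := hGS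
  have hle : r ≤ G := hrmin G hGpos hGper
  have hge : G ≤ r := Nat.gcd_le_left M hrpos
  have : r = G := le_antisymm hle hge
  exact hdvd (this ▸ Nat.gcd_dvd_right r M)
end
end

section
/- Let q be a power of a prime, let n ≥ 2, let ζ be a primitive element of F_{q^n}, let F : F_{q^n} → F_{q^n}, let f : Z/(q^n−1)Z → F_{q^n} be defined by f(k) = F(ζ^k), and let r be the least period of the DFT F_ζ[f]. If the support of F contains an element of degree n over F_q, then r does not divide q^d−1 for any positive divisor d of n with d < n. -/
open scoped Classical

noncomputable section

section Aux

variable {K : Type*} [Field K]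

lemma aux_sum_val {N : ℕ} [NeZero N] (u : K) :
    ∑ m : ZMod N, u ^ m.val = ∑ i ∈ Finset.range N, u ^ i := by
  apply Finset.sum_nbij' (fun m : ZMod N => m.val) (fun i : ℕ => (i : ZMod N))
  · intro a _; exact Finset.mem_range.mpr (ZMod.val_lt a)
  · intro a _; exact Finset.mem_univ _
  · intro a _; simp [ZMod.natCast_val, ZMod.cast_id]
  · intro a ha; exact ZMod.val_cast_of_lt (Finset.mem_range.mp ha)
  · intro a _; rfl

lemma geom_sum_zmod {N : ℕ} [NeZero N] (u : K) (hu : u ^ N = 1) :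
    ∑ m : ZMod N, u ^ m.val = if u = 1 then (N : K) else 0 := by
  rw [aux_sum_val]
  by_cases h1 : u = 1
  · simp [h1]
  · rw [if_neg h1, geom_sum_eq h1 N, hu, sub_self, zero_div]

/-- Orthogonality / injectivity of the DFT. -/
lemma dft_vanish {N : ℕ} [NeZero N] (ζ : K) (hζ : orderOf ζ = N)
    (hN : (N : K) ≠ 0) (c : ZMod N → K)
    (h : ∀ m : ZMod N, ∑ j : ZMod N, c j * ζ ^ (m.val * j.val) = 0) :
    ∀ k, c k = 0 := by
  have hN1 : 1 ≤ N := Nat.one_le_iff_ne_zero.mpr (NeZero.ne N)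
  have hζN : ζ ^ N = 1 := by rw [← hζ]; exact pow_orderOf_eq_one ζ
  intro k
  have expand : ∀ m j : ZMod N, (c j * ζ ^ (m.val * j.val)) * ζ ^ (m.val * ((N-1)*k.val))
      = c j * (ζ ^ (j.val + (N-1)*k.val)) ^ m.val := by
    intro m j
    rw [mul_assoc, ← pow_add, ← Nat.mul_add, mul_comm m.val _, pow_mul]
  have key : (0 : K) = ∑ j : ZMod N, c j * ∑ m : ZMod N, (ζ ^ (j.val + (N-1)*k.val)) ^ m.val := by
    have : (0 : K) = ∑ m : ZMod N, (∑ j : ZMod N, c j * ζ ^ (m.val * j.val))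
        * ζ ^ (m.val * ((N-1)*k.val)) := by simp [h]
    rw [this]
    simp_rw [Finset.sum_mul, expand]
    rw [Finset.sum_comm]
    simp_rw [Finset.mul_sum]
  have cond : ∀ j : ZMod N, (ζ ^ (j.val + (N-1)*k.val) = 1) ↔ j = k := by
    intro j
    rw [← orderOf_dvd_iff_pow_eq_one, hζ, ← ZMod.natCast_eq_zero_iff]
    have hcast : ((j.val + (N-1)*k.val : ℕ) : ZMod N) = j - k := by
      push_cast [Nat.cast_sub hN1]
      simp [ZMod.natCast_val, ZMod.cast_id, ZMod.natCast_self]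
      ring
    rw [hcast, sub_eq_zero]
  have inner : ∀ j : ZMod N, ∑ m : ZMod N, (ζ ^ (j.val + (N-1)*k.val)) ^ m.val
      = if j = k then (N : K) else 0 := by
    intro j
    have hu : (ζ ^ (j.val + (N-1)*k.val)) ^ N = 1 := by
      rw [← pow_mul, mul_comm, pow_mul, hζN, one_pow]
    rw [geom_sum_zmod _ hu]
    exact if_congr (cond j) rfl rfl
  simp_rw [inner, mul_ite, mul_zero] at key
  rw [Finset.sum_ite_eq' Finset.univ k] at key
  simp only [Finset.mem_univ, if_true] at key
  exact (mul_eq_zero.mp key.symm).resolve_right hN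

lemma IsPeriodOf.mul {N : ℕ} {α : Type*} {g : ZMod N → α} {r : ℕ}
    (h : IsPeriodOf g r) (c : ℕ) : IsPeriodOf g (r * c) := by
  induction c with
  | zero => intro m; simp
  | succ c ih =>
    intro m
    have e : ((r * (c+1) : ℕ) : ZMod N) = ((r * c : ℕ) : ZMod N) + (r : ZMod N) := by
      push_cast; ring
    rw [e, ← add_assoc, h (m + ((r*c : ℕ) : ZMod N)), ih m]

end Aux

/-- Lemma 1.2 (ii): if `supp F` contains an element of degree `n` over `F_q`,
then the least period `r` of `F_ζ[f]` does not divide `q^d - 1` for any positive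
divisor `d` of `n` with `d < n`. -/
theorem leastPeriod_not_dvd_of_supp_contains_degree_n
    (q n : ℕ) (hn : 2 ≤ n)
    (Fq Fqn : Type) [Field Fq] [Fintype Fq] [Field Fqn] [Fintype Fqn]
    [Algebra Fq Fqn]
    (hq : Fintype.card Fq = q) (hqn : Fintype.card Fqn = q ^ n)
    [NeZero (q ^ n - 1)]
    (ζ : Fqn) (hζ : orderOf ζ = q ^ n - 1)
    (F : Fqn → Fqn) (f : ZMod (q ^ n - 1) → Fqn)
    (hf : ∀ k : ZMod (q ^ n - 1), f k = F (ζ ^ k.val))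
    (r : ℕ) (hr : IsLeastPeriod (dft ζ f) r)
    (hsupp : ∃ ξ : Fqn, F ξ ≠ 0 ∧ (minpoly Fq ξ).natDegree = n) :
    ∀ d : ℕ, 0 < d → d ∣ n → d < n → ¬ r ∣ (q ^ d - 1) := by
  intro d hd0 hddvd hdlt hrdvd
  have hq2 : 2 ≤ q := hq ▸ Fintype.one_lt_card
  have hqd : q ^ d < q ^ n := Nat.pow_lt_pow_right hq2 hdlt
  have hqd2 : 2 ≤ q ^ d := le_trans hq2 (Nat.le_self_pow hd0.ne' q)
  have hqn1 : 1 ≤ q ^ n := le_of_lt (lt_of_le_of_lt (by omega) hqd)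
  have hNpos : 0 < q ^ n - 1 := by omega
  have hcard0 : ((q ^ n : ℕ) : Fqn) = 0 := by rw [← hqn]; exact Nat.cast_card_eq_zero Fqn
  have hNne : ((q ^ n - 1 : ℕ) : Fqn) ≠ 0 := by
    have : ((q ^ n - 1 : ℕ) : Fqn) = -1 := by
      rw [Nat.cast_sub hqn1, hcard0, Nat.cast_one, zero_sub]
    rw [this]
    exact neg_ne_zero.mpr one_ne_zero
  have hζN : ζ ^ (q ^ n - 1) = 1 := by rw [← hζ]; exact pow_orderOf_eq_one ζ
  have hpow : ∀ a b : ℕ, (a : ZMod (q ^ n - 1)) = (b : ZMod (q ^ n - 1)) → ζ ^ a = ζ ^ b := by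
    have key : ∀ a : ℕ, ζ ^ a = ζ ^ (a % (q ^ n - 1)) := by
      intro a
      conv_lhs => rw [← Nat.mod_add_div a (q ^ n - 1)]
      rw [pow_add, pow_mul, hζN, one_pow, mul_one]
    intro a b hab
    rw [key a, key b, (ZMod.natCast_eq_natCast_iff' a b (q ^ n - 1)).mp hab]
  -- (q^d-1)-periodicity of the DFT
  have hper : IsPeriodOf (dft ζ f) (q ^ d - 1) := by
    obtain ⟨c, hc⟩ := hrdvd
    rw [hc]
    exact hr.2.1.mul c
  -- the coefficients vanish
  have hvanish : ∀ k : ZMod (q ^ n - 1), f k * (ζ ^ ((q ^ d - 1) * k.val) - 1) = 0 := by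
    apply dft_vanish ζ hζ hNne
    intro m
    have e1 : ∀ j : ZMod (q ^ n - 1),
        ζ ^ ((m + ((q ^ d - 1 : ℕ) : ZMod (q ^ n - 1))).val * j.val)
          = ζ ^ ((m.val + (q ^ d - 1)) * j.val) := by
      intro j
      apply hpow
      push_cast [ZMod.natCast_val, ZMod.cast_id]
      ring
    have e2 : ∑ j : ZMod (q ^ n - 1), (f j * (ζ ^ ((q ^ d - 1) * j.val) - 1)) * ζ ^ (m.val * j.val)
        = dft ζ f (m + ((q ^ d - 1 : ℕ) : ZMod (q ^ n - 1))) - dft ζ f m := by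
      rw [dft, dft, ← Finset.sum_sub_distrib]
      apply Finset.sum_congr rfl
      intro j _
      rw [e1 j, add_mul, pow_add]
      ring
    rw [e2, hper m, sub_self]
  -- pick the element of degree n
  obtain ⟨ξ, hξ0, hξdeg⟩ := hsupp
  have hξne : ξ ≠ 0 := by
    intro h
    rw [h, minpoly.zero, Polynomial.natDegree_X] at hξdeg
    omega
  have hζne : ζ ≠ 0 := by
    intro h
    exact one_ne_zero (α := Fqn) (by rw [← hζN, h, zero_pow hNpos.ne'])
  -- express ξ as a power of ζ
  have hcardu : Fintype.card Fqnˣ = q ^ n - 1 := by rw [Fintype.card_units, hqn]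
  have hou : orderOf (Units.mk0 ζ hζne) = q ^ n - 1 := by rw [← orderOf_units]; exact hζ
  have hinj : Function.Injective (fun i : Fin (q ^ n - 1) => (Units.mk0 ζ hζne) ^ (i : ℕ)) := by
    intro a b hab
    have := pow_injOn_Iio_orderOf (x := Units.mk0 ζ hζne)
      (by rw [hou]; exact a.isLt) (by rw [hou]; exact b.isLt) hab
    exact Fin.ext this
  have hbij : Function.Bijective (fun i : Fin (q ^ n - 1) => (Units.mk0 ζ hζne) ^ (i : ℕ)) :=
    (Fintype.bijective_iff_injective_and_card _).mpr ⟨hinj, by simp [hcardu]⟩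
  obtain ⟨i, hi⟩ := hbij.2 (Units.mk0 ξ hξne)
  have hk : ζ ^ (i : ℕ) = ξ := by
    have := congrArg Units.val hi
    simpa using this
  have hjval : (((i : ℕ) : ZMod (q ^ n - 1))).val = (i : ℕ) := ZMod.val_cast_of_lt i.isLt
  have hfj : f ((i : ℕ) : ZMod (q ^ n - 1)) ≠ 0 := by rw [hf, hjval, hk]; exact hξ0
  have hzsk : ζ ^ ((q ^ d - 1) * (i : ℕ)) = 1 := by
    have h0 := hvanish ((i : ℕ) : ZMod (q ^ n - 1))
    rw [hjval] at h0
    rcases mul_eq_zero.mp h0 with h | h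
    · exact absurd h hfj
    · have := sub_eq_zero.mp h
      exact this
  have hxs : ξ ^ (q ^ d - 1) = 1 := by
    rw [← hk, ← pow_mul, mul_comm]
    exact hzsk
  have hxqd : ξ ^ (q ^ d) = ξ := by
    have hq1 : q ^ d = (q ^ d - 1) + 1 := by omega
    rw [hq1, pow_succ, hxs, one_mul]
  -- the Frobenius-power algebra endomorphism
  have hp : (ringChar Fq).Prime := CharP.char_is_prime Fq (ringChar Fq)
  haveI : Fact (ringChar Fq).Prime := ⟨hp⟩
  obtain ⟨m, -, hm⟩ := FiniteField.card Fq (ringChar Fq)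
  rw [hq] at hm
  haveI hcFqn : CharP Fqn (ringChar Fq) :=
    charP_of_injective_algebraMap (algebraMap Fq Fqn).injective (ringChar Fq)
  have hqd_pow : q ^ d = (ringChar Fq) ^ ((m : ℕ) * d) := by rw [hm, ← pow_mul]
  let φ : Fqn →ₐ[Fq] Fqn :=
    { toRingHom := iterateFrobenius Fqn (ringChar Fq) ((m : ℕ) * d)
      commutes' := by
        intro a
        show (algebraMap Fq Fqn a) ^ (ringChar Fq) ^ ((m : ℕ) * d) = algebraMap Fq Fqn a
        rw [← hqd_pow, ← map_pow]
        congr 1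
        rw [← hq]
        exact FiniteField.pow_card_pow d a }
  have hφ : ∀ x : Fqn, φ x = x ^ (q ^ d) := by
    intro x
    show iterateFrobenius Fqn (ringChar Fq) ((m : ℕ) * d) x = x ^ q ^ d
    rw [iterateFrobenius_def, hqd_pow]
  -- adjoin ξ is everything
  have hint : IsIntegral Fq ξ := IsIntegral.of_finite Fq ξ
  have hfinrank : Module.finrank Fq Fqn = n := by
    have hcard := Module.card_eq_pow_finrank (K := Fq) (V := Fqn)
    rw [hq, hqn] at hcard
    exact (Nat.pow_right_injective hq2 hcard.symm)
  have hfr_adj : Module.finrank Fq (Algebra.adjoin Fq {ξ}) = n := by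
    rw [(Algebra.adjoin.powerBasis hint).finrank]
    exact hξdeg
  have htop : Algebra.adjoin Fq {ξ} = ⊤ := by
    rw [← Algebra.toSubmodule_eq_top]
    apply Submodule.eq_top_of_finrank_eq
    rw [hfinrank, (Algebra.adjoin Fq {ξ}).finrank_toSubmodule]
    exact hfr_adj
  -- conclude that φ is the identity, in particular at ζ
  have hζqd : ζ ^ (q ^ d) = ζ := by
    have hsub : Algebra.adjoin Fq {ξ} ≤ AlgHom.equalizer φ (AlgHom.id Fq Fqn) := by
      apply Algebra.adjoin_le
      intro x hx
      rw [Set.mem_singleton_iff] at hx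
      rw [hx]
      show φ ξ = ξ
      rw [hφ]
      exact hxqd
    have hmem : ζ ∈ AlgHom.equalizer φ (AlgHom.id Fq Fqn) := by
      rw [htop] at hsub
      exact hsub Algebra.mem_top
    have hmem' : φ ζ = ζ := hmem
    rwa [hφ] at hmem'
  -- contradiction with the order of ζ
  have hζs : ζ ^ (q ^ d - 1) = 1 := by
    have h1 : ζ ^ (q ^ d - 1) * ζ = 1 * ζ := by
      rw [← pow_succ, one_mul]
      have hq1 : (q ^ d - 1) + 1 = q ^ d := by omega
      rw [hq1, hζqd]
    exact mul_right_cancel₀ hζne h1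
  have hdvd : q ^ n - 1 ∣ q ^ d - 1 := by
    rw [← hζ]
    exact orderOf_dvd_of_pow_eq_one hζs
  have := Nat.le_of_dvd (by omega) hdvd
  omega
end
end

section
/- Let q be a power of a prime, let n ≥ 2, let ζ be a primitive element of F_{q^n}, let F : F_{q^n} → F_{q^n}, let f : Z/(q^n−1)Z → F_{q^n} be defined by f(k) = F(ζ^k), and let r be the least period of the DFT F_ζ[f]. If the support of F contains a primitive element of F_{q^n}, then r = q^n−1. -/
open scoped Classical

noncomputable section

private theorem dft_leastPeriod_aux
    (N : ℕ) [NeZero N] (Fqn : Type) [Field Fqn] [Fintype Fqn]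
    (hqn : Fintype.card Fqn = N + 1)
    (ζ : Fqn) (hζ : orderOf ζ = N)
    (F : Fqn → Fqn) (f : ZMod N → Fqn)
    (hf : ∀ k : ZMod N, f k = F (ζ ^ k.val))
    (r : ℕ) (hr : IsLeastPeriod (dft ζ f) r)
    (hsupp : ∃ ξ : Fqn, F ξ ≠ 0 ∧ orderOf ξ = N) :
    r = N := by
  classical
  have hNpos : 0 < N := Nat.pos_of_ne_zero (NeZero.ne _)
  have hζfin : IsOfFinOrder ζ := by
    rw [← orderOf_pos_iff, hζ]; exact hNpos
  have hζN : ζ ^ N = 1 := by rw [← hζ]; exact pow_orderOf_eq_one ζ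
  have hcastN : (N : Fqn) = -1 := by
    have h0 : ((N + 1 : ℕ) : Fqn) = 0 := by
      rw [← hqn]; exact FiniteField.cast_card_eq_zero Fqn
    push_cast at h0
    linear_combination h0
  have hcastN0 : (N : Fqn) ≠ 0 := by rw [hcastN]; exact neg_ne_zero.mpr one_ne_zero
  -- express ξ as a power of ζ
  obtain ⟨ξ, hξ0, hξord⟩ := hsupp
  have hξN : ξ ^ N = 1 := by rw [← hξord]; exact pow_orderOf_eq_one ξ
  have hζu : IsUnit ζ := IsUnit.of_pow_eq_one hζN hNpos.ne'
  have hξu : IsUnit ξ := IsUnit.of_pow_eq_one hξN hNpos.ne'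
  have hcardu : Nat.card Fqnˣ = N := by
    rw [Nat.card_eq_fintype_card, Fintype.card_units, hqn]
    omega
  have hordu : orderOf hζu.unit = N := by
    rw [← orderOf_units, IsUnit.unit_spec, hζ]
  have htop : Subgroup.zpowers hζu.unit = ⊤ := by
    apply Subgroup.eq_top_of_card_eq
    rw [Nat.card_zpowers, hordu, hcardu]
  obtain ⟨k, hk⟩ : ∃ k : ℤ, hζu.unit ^ k = hξu.unit := by
    have : hξu.unit ∈ Subgroup.zpowers hζu.unit := htop ▸ Subgroup.mem_top _
    exact Subgroup.mem_zpowers_iff.mp this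
  set k0 : ℕ := (k % (N : ℤ)).toNat with hk0def
  have hmn : (0 : ℤ) ≤ k % (N : ℤ) := Int.emod_nonneg k (by exact_mod_cast hNpos.ne')
  have hml : k % (N : ℤ) < N := Int.emod_lt_of_pos k (by exact_mod_cast hNpos)
  have hk0lt : k0 < N := by omega
  have hξζ : ξ = ζ ^ k0 := by
    have h1 : hζu.unit ^ (k0 : ℤ) = hξu.unit := by
      rw [hk0def, Int.toNat_of_nonneg hmn, ← hordu, zpow_mod_orderOf, hk]
    have h2 : hζu.unit ^ k0 = hξu.unit := by rw [← zpow_natCast, h1]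
    have := congrArg (Units.val) h2
    rw [Units.val_pow_eq_pow_val, IsUnit.unit_spec, IsUnit.unit_spec] at this
    exact this.symm
  -- gcd(N, k0) = 1
  have hcop : Nat.Coprime N k0 := by
    have h1 : orderOf (ζ ^ k0) = N := by rw [← hξζ, hξord]
    rw [hζfin.orderOf_pow, hζ] at h1
    have hd := Nat.gcd_dvd_left N k0
    have h2 := Nat.div_mul_cancel hd
    rw [h1] at h2
    exact Nat.eq_of_mul_eq_mul_left hNpos (h2.trans (Nat.mul_one N).symm)
  -- congruence for powers of ζ
  have hpow : ∀ a b : ℕ, a % N = b % N → ζ ^ a = ζ ^ b := by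
    intro a b h
    rw [← pow_mod_orderOf, hζ, h, ← hζ, pow_mod_orderOf]
  -- geometric sum
  have hsum : ∀ t : ℕ, ∑ m : ZMod N, (ζ ^ t) ^ m.val =
      if N ∣ t then (N : Fqn) else 0 := by
    intro t
    have hbij : ∑ m : ZMod N, (ζ ^ t) ^ m.val = ∑ i ∈ Finset.range N, (ζ ^ t) ^ i := by
      apply Finset.sum_nbij' (fun (m : ZMod N) => m.val) (fun (i : ℕ) => (i : ZMod N))
      · intro a _; exact Finset.mem_range.mpr (ZMod.val_lt a)
      · intro a _; exact Finset.mem_univ _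
      · intro a _; exact ZMod.natCast_rightInverse a
      · intro a ha; exact ZMod.val_cast_of_lt (Finset.mem_range.mp ha)
      · intro a _; rfl
    rw [hbij]
    by_cases h : N ∣ t
    · have h1 : ζ ^ t = 1 := by
        rw [← hζ] at h; exact orderOf_dvd_iff_pow_eq_one.mp h
      simp [h, h1]
    · have h1 : ζ ^ t ≠ 1 := by
        rw [← hζ] at h
        exact fun hc => h (orderOf_dvd_iff_pow_eq_one.mpr hc)
      have h2 : (∑ i ∈ Finset.range N, (ζ ^ t) ^ i) * (ζ ^ t - 1) = 0 := by
        rw [geom_sum_mul, ← pow_mul, mul_comm t N, pow_mul, hζN, one_pow, sub_self]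
      rcases mul_eq_zero.mp h2 with h3 | h3
      · simp [h, h3]
      · exact absurd (by linear_combination h3) h1
  -- periodicity gives vanishing sums
  have hper : ∀ m : ZMod N, ∑ j : ZMod N,
      f j * (ζ ^ (r * j.val) - 1) * ζ ^ (m.val * j.val) = 0 := by
    intro m
    have h1 := hr.2.1 m
    unfold dft at h1
    have h2 : ∀ j : ZMod N, ζ ^ ((m + (r : ZMod N)).val * j.val) =
        ζ ^ (m.val * j.val) * ζ ^ (r * j.val) := by
      intro j
      rw [← pow_add, ← add_mul]
      apply hpow
      have hv : (m + (r : ZMod N)).val % N = (m.val + r) % N := by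
        rw [ZMod.val_add, ZMod.val_natCast]
        conv_lhs => rw [Nat.add_mod m.val (r % N) N, Nat.mod_mod_of_dvd r dvd_rfl]
        rw [← Nat.add_mod, Nat.mod_mod_of_dvd _ dvd_rfl]
      calc (m + (r : ZMod N)).val * j.val % N
          = (m + (r : ZMod N)).val % N * (j.val % N) % N := by rw [Nat.mul_mod]
        _ = (m.val + r) % N * (j.val % N) % N := by rw [hv]
        _ = (m.val + r) * j.val % N := by rw [← Nat.mul_mod]
    calc ∑ j : ZMod N, f j * (ζ ^ (r * j.val) - 1) * ζ ^ (m.val * j.val)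
        = (∑ j : ZMod N, f j * ζ ^ ((m + (r : ZMod N)).val * j.val)) -
          ∑ j : ZMod N, f j * ζ ^ (m.val * j.val) := by
          rw [← Finset.sum_sub_distrib]
          apply Finset.sum_congr rfl
          intro j _
          rw [h2 j]; ring
      _ = 0 := by rw [h1, sub_self]
  -- key evaluation at k0
  set j0 : ZMod N := (k0 : ZMod N) with hj0def
  have hj0val : j0.val = k0 := ZMod.val_cast_of_lt hk0lt
  have hkey : f j0 * (ζ ^ (r * j0.val) - 1) * (N : Fqn) = 0 := by
    have hS : ∑ j : ZMod N, f j * (ζ ^ (r * j.val) - 1) *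
        (∑ m : ZMod N, (ζ ^ (j.val + (N - k0))) ^ m.val) = 0 := by
      have e1 : ∀ j m : ZMod N, (ζ ^ (j.val + (N - k0))) ^ m.val =
          ζ ^ (m.val * j.val) * ζ ^ ((N - k0) * m.val) := by
        intro j m
        rw [← pow_add, ← pow_mul]
        congr 1
        ring
      calc ∑ j : ZMod N, f j * (ζ ^ (r * j.val) - 1) *
            (∑ m : ZMod N, (ζ ^ (j.val + (N - k0))) ^ m.val)
          = ∑ j : ZMod N, ∑ m : ZMod N,
              (f j * (ζ ^ (r * j.val) - 1) * ζ ^ (m.val * j.val)) * ζ ^ ((N - k0) * m.val) := by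
            apply Finset.sum_congr rfl
            intro j _
            rw [Finset.mul_sum]
            apply Finset.sum_congr rfl
            intro m _
            rw [e1 j m]; ring
        _ = ∑ m : ZMod N, ∑ j : ZMod N,
              (f j * (ζ ^ (r * j.val) - 1) * ζ ^ (m.val * j.val)) * ζ ^ ((N - k0) * m.val) :=
            Finset.sum_comm
        _ = ∑ m : ZMod N, (∑ j : ZMod N,
              f j * (ζ ^ (r * j.val) - 1) * ζ ^ (m.val * j.val)) * ζ ^ ((N - k0) * m.val) := by
            apply Finset.sum_congr rfl
            intro m _
            rw [Finset.sum_mul]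
        _ = 0 := by
            apply Finset.sum_eq_zero
            intro m _
            rw [hper m, zero_mul]
    have hS2 : ∑ j : ZMod N, f j * (ζ ^ (r * j.val) - 1) *
        (if j = j0 then (N : Fqn) else 0) = 0 := by
      have e : ∀ j ∈ (Finset.univ : Finset (ZMod N)),
          f j * (ζ ^ (r * j.val) - 1) * (if j = j0 then (N : Fqn) else 0) =
          f j * (ζ ^ (r * j.val) - 1) * (∑ m : ZMod N, (ζ ^ (j.val + (N - k0))) ^ m.val) := by
        intro j _
        rw [hsum]
        congr 1
        have hjlt := ZMod.val_lt j
        have hiff : N ∣ (j.val + (N - k0)) ↔ j = j0 := by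
          constructor
          · intro h
            have hpos' : 0 < j.val + (N - k0) := by omega
            have hle := Nat.le_of_dvd hpos' h
            have hsub : N ∣ (j.val + (N - k0) - N) := Nat.dvd_sub h dvd_rfl
            have hlt2 : j.val + (N - k0) - N < N := by omega
            have h0 : j.val + (N - k0) - N = 0 := Nat.eq_zero_of_dvd_of_lt hsub hlt2
            have hv : j.val = k0 := by omega
            exact ZMod.val_injective N (hv.trans hj0val.symm)
          · rintro rfl
            rw [hj0val]
            have hNk : k0 + (N - k0) = N := by omega
            rw [hNk]
        exact if_congr hiff.symm rfl rfl
      rw [Finset.sum_congr rfl e, hS]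
    rw [← hS2]
    rw [Finset.sum_eq_single j0]
    · rw [if_pos rfl]
    · intro b _ hb
      rw [if_neg hb, mul_zero]
    · intro hj0
      exact absurd (Finset.mem_univ j0) hj0
  -- conclude N ∣ r
  rw [hcastN, mul_neg_one, neg_eq_zero] at hkey
  have hfj0 : f j0 ≠ 0 := by
    rw [hf j0, hj0val, ← hξζ]
    exact hξ0
  have hone : ζ ^ (r * k0) = 1 := by
    rcases mul_eq_zero.mp hkey with h | h
    · exact absurd h hfj0
    · rw [hj0val] at h
      linear_combination h
  have hdvd : N ∣ r * k0 := by
    rw [← hζ]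
    exact orderOf_dvd_of_pow_eq_one hone
  have hNr : N ∣ r := hcop.dvd_of_dvd_mul_right hdvd
  have hperN : IsPeriodOf (dft ζ f) N := by
    intro m
    rw [ZMod.natCast_self, add_zero]
  have hub : r ≤ N := hr.2.2 N hNpos hperN
  have hlb : N ≤ r := Nat.le_of_dvd hr.1 hNr
  omega

/-- Lemma 1.2 (iii): if `supp F` contains a primitive element of `F_{q^n}`,
then the least period `r` of `F_ζ[f]` equals `q^n - 1`. -/
theorem leastPeriod_eq_max_of_supp_contains_primitive
    (q n : ℕ) (hn : 2 ≤ n)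
    (Fq Fqn : Type) [Field Fq] [Fintype Fq] [Field Fqn] [Fintype Fqn]
    [Algebra Fq Fqn]
    (hq : Fintype.card Fq = q) (hqn : Fintype.card Fqn = q ^ n)
    [NeZero (q ^ n - 1)]
    (ζ : Fqn) (hζ : orderOf ζ = q ^ n - 1)
    (F : Fqn → Fqn) (f : ZMod (q ^ n - 1) → Fqn)
    (hf : ∀ k : ZMod (q ^ n - 1), f k = F (ζ ^ k.val))
    (r : ℕ) (hr : IsLeastPeriod (dft ζ f) r)
    (hsupp : ∃ ξ : Fqn, F ξ ≠ 0 ∧ orderOf ξ = q ^ n - 1) :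
    r = q ^ n - 1 := by
  have hpos : 0 < q ^ n - 1 := Nat.pos_of_ne_zero (NeZero.ne _)
  exact dft_leastPeriod_aux (q ^ n - 1) Fqn
    (by rw [hqn]; omega) ζ hζ F f hf r hr hsupp
end
end

section
/- Let q be a power of a prime, let n ≥ 2, let h(x) ∈ F_q[x], and let L be any subfield of F_{q^n} containing the image h(F_{q^n}^×). Define S(x) = (1 − h(x)^{#L^×}) mod (x^{q^n−1} − 1) ∈ F_q[x], and write S(x) = Σ_{i=0}^{q^n−2} s_i x^i. If the cyclic sequence (s_i)_{i=0}^{q^n−2}, viewed as a function Z/(q^n−1)Z → F_q, has least period r with r not dividing (q^n−1)/Φ_n(q), then h(x) has an irreducible factor of degree n over F_q. -/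
open scoped Classical

noncomputable section

/-!
Put `N = q ^ n - 1` and `M = N / Φ_n(q)`, and suppose `h` has no irreducible factor of degree `n`.
A root `a ∈ F_{q^n}ˣ` of `h` then has a minimal polynomial of degree `d ∣ n` with `d < n`, so
`a ^ (q ^ d - 1) = 1`, and `q ^ d - 1 ∣ M` because `(x ^ d - 1) Φ_n(x) ∣ x ^ n - 1`; hence
`a ^ M = 1`. Any other `a ∈ F_{q^n}ˣ` has `h(a) ∈ Lˣ`, so `h(a) ^ #Lˣ = 1`. Thus
`(x ^ M - 1) (1 - h ^ #Lˣ)` vanishes on `F_{q^n}ˣ` and is divisible by `x ^ N - 1`, that is,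
`x ^ M S ≡ S` modulo `x ^ N - 1`. This says that the cyclic coefficient sequence of `S` is
`M`-periodic, so its least period `r` divides `M`.
-/

open Polynomial

lemma IsLeastPeriod.dvd {N : ℕ} {α : Type*} {g : ZMod N → α} {r s : ℕ}
    (hr : IsLeastPeriod g r) (hs : IsPeriodOf g s) : r ∣ s := by
  obtain ⟨hr0, hrp, hmin⟩ := hr
  have hgcd : IsPeriodOf g (r.gcd s) := by
    have hbezout := congrArg (Int.cast : ℤ → ZMod N) (Nat.gcd_eq_gcd_ab r s)
    push_cast at hbezout
    rw [IsPeriodOf, hbezout, mul_comm (r : ZMod N), mul_comm (s : ZMod N)]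
    exact (Function.Periodic.int_mul hrp _).add_period (Function.Periodic.int_mul hs _)
  rw [← Nat.gcd_eq_left_iff_dvd]
  exact le_antisymm (Nat.gcd_le_left s hr0) (hmin _ (Nat.gcd_pos_of_pos_left s hr0) hgcd)

namespace Polynomial

variable {R : Type*} [CommRing R] (N : ℕ)

lemma monic_X_pow_sub_one {n : ℕ} (hn : n ≠ 0) : (X ^ n - 1 : R[X]).Monic := by
  simpa using monic_X_pow_sub_C (1 : R) hn

/-- The isomorphism `R[X] ⧸ (X ^ N - 1) ≃ (ZMod N → R)` read on representatives: the
coefficients of `p` are summed along the residue classes of the exponents modulo `N`. -/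
def cyclicCoeff : R[X] →ₗ[R] ZMod N → R :=
  lsum fun j => LinearMap.single R (fun _ => R) (j : ZMod N)

@[simp]
lemma cyclicCoeff_monomial (j : ℕ) (c : R) :
    cyclicCoeff N (monomial j c) = Pi.single (j : ZMod N) c := by
  simp [cyclicCoeff, sum_monomial_index]

lemma cyclicCoeff_X_pow_mul (k : ℕ) (p : R[X]) (m : ZMod N) :
    cyclicCoeff N (X ^ k * p) m = cyclicCoeff N p (m - k) := by
  induction p using Polynomial.induction_on' with
  | add p q hp hq => simp [mul_add, hp, hq]
  | monomial j c =>
    rw [X_pow_mul_monomial, cyclicCoeff_monomial, cyclicCoeff_monomial]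
    simp [Pi.single_apply, sub_eq_iff_eq_add]

lemma cyclicCoeff_X_pow_sub_one_mul (p : R[X]) : cyclicCoeff N ((X ^ N - 1) * p) = 0 := by
  ext m
  simp [sub_mul, cyclicCoeff_X_pow_mul]

lemma cyclicCoeff_modByMonic (p : R[X]) :
    cyclicCoeff N (p %ₘ (X ^ N - 1)) = cyclicCoeff N p := by
  conv_rhs => rw [← modByMonic_add_div p (X ^ N - 1)]
  rw [map_add, cyclicCoeff_X_pow_sub_one_mul, add_zero]

lemma cyclicCoeff_of_degree_lt [NeZero N] {p : R[X]} (hp : p.degree < N) (m : ZMod N) :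
    cyclicCoeff N p m = p.coeff m.val := by
  have hp' : p.natDegree < N := by
    rcases eq_or_ne p 0 with rfl | h0
    · simpa using NeZero.pos N
    · exact (natDegree_lt_iff_degree_lt h0).mpr hp
  conv_lhs => rw [as_sum_range' p N hp']
  rw [map_sum, Finset.sum_apply, Finset.sum_eq_single m.val]
  · simp
  · intro j hj hjm
    rw [cyclicCoeff_monomial, Pi.single_apply, if_neg]
    rintro rfl
    exact hjm (ZMod.val_natCast_of_lt (Finset.mem_range.mp hj)).symm
  · exact fun h => absurd (Finset.mem_range.mpr (ZMod.val_lt m)) h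

end Polynomial

lemma isPeriodOf_coeff_modByMonic {R : Type*} [CommRing R] [Nontrivial R] {N : ℕ} [NeZero N]
    {p : R[X]} {M : ℕ} (h : X ^ N - 1 ∣ (X ^ M - 1) * p) :
    IsPeriodOf (fun i : ZMod N => (p %ₘ (X ^ N - 1)).coeff i.val) M := by
  have hdeg : (p %ₘ (X ^ N - 1)).degree < N := by
    have := degree_X_pow_sub_C (NeZero.pos N) (1 : R)
    rw [map_one] at this
    exact this ▸ degree_modByMonic_lt p (monic_X_pow_sub_one (NeZero.ne N))
  have hcoeff (i : ZMod N) : cyclicCoeff N p i = (p %ₘ (X ^ N - 1)).coeff i.val := by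
    rw [← cyclicCoeff_modByMonic, cyclicCoeff_of_degree_lt N hdeg]
  obtain ⟨T, hT⟩ := h
  have hshift : cyclicCoeff N (X ^ M * p) = cyclicCoeff N p := by
    have := congrArg (cyclicCoeff N) hT
    rwa [cyclicCoeff_X_pow_sub_one_mul, sub_mul, one_mul, map_sub, sub_eq_zero] at this
  intro m
  have := congrFun hshift (m + M)
  rwa [cyclicCoeff_X_pow_mul, add_sub_cancel_right, hcoeff, hcoeff, eq_comm] at this

lemma FiniteField.X_pow_card_sub_one_sub_one_dvd {K : Type*} [Field K] [Fintype K] {p : K[X]}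
    (hp : ∀ a : K, a ≠ 0 → p.eval a = 0) : X ^ (Fintype.card K - 1) - 1 ∣ p := by
  have hN : Fintype.card K - 1 ≠ 0 := by have := Fintype.one_lt_card (α := K); omega
  have hmonic := monic_X_pow_sub_one (R := K) hN
  have hdeg : (X ^ (Fintype.card K - 1) - 1 : K[X]).natDegree = Fintype.card K - 1 := by
    simpa using natDegree_X_pow_sub_C (n := Fintype.card K - 1) (r := (1 : K))
  -- the remainder has degree `< #Kˣ` and vanishes on `Kˣ`
  rw [← modByMonic_eq_zero_iff_dvd hmonic]
  refine eq_zero_of_natDegree_lt_card_of_eval_eq_zero _ Units.val_injective (fun u => ?_) ?_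
  · have := congrArg (eval (u : K)) (modByMonic_add_div p (X ^ (Fintype.card K - 1) - 1))
    simpa [FiniteField.pow_card_sub_one_eq_one _ u.ne_zero, hp _ u.ne_zero] using this
  · rw [Fintype.card_units]
    calc _ < (X ^ (Fintype.card K - 1) - 1 : K[X]).natDegree :=
          natDegree_modByMonic_lt p hmonic fun h => hN (by simpa [h] using hdeg.symm)
      _ = _ := hdeg

lemma FiniteField.pow_natCard_pow_natDegree_minpoly_sub_one_eq_one {K L : Type*} [Field K]
    [Finite K] [Field L] [Algebra K L] {a : L} (hint : IsIntegral K a) (ha : a ≠ 0) :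
    a ^ (Nat.card K ^ (minpoly K a).natDegree - 1) = 1 := by
  have hdvd := (minpoly.irreducible hint).natDegree_dvd_iff_dvd_X_pow_card_pow_sub_X.mp dvd_rfl
  have hfix : a ^ Nat.card K ^ (minpoly K a).natDegree = a := by
    simpa [sub_eq_zero] using minpoly.dvd_iff.mp hdvd
  rw [pow_sub₀ a ha (Nat.one_le_pow _ _ Nat.card_pos), hfix, pow_one, mul_inv_cancel₀ ha]

lemma Subfield.pow_natCard_units_eq_one {K : Type*} [DivisionRing K] (L : Subfield K) {x : K}
    (hxL : x ∈ L) (hx : x ≠ 0) : x ^ Nat.card Lˣ = 1 := by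
  have := congrArg (fun u : Lˣ => ((u : L) : K))
    (pow_card_eq_one' (x := Units.mk0 (⟨x, hxL⟩ : L) fun h => hx (congrArg Subtype.val h)))
  simp only [Units.val_pow_eq_pow_val, SubmonoidClass.coe_pow, Units.val_mk0, Units.val_one,
    OneMemClass.coe_one] at this
  exact this

lemma pow_sub_one_dvd_div_eval_cyclotomic {q n d : ℕ} (hq : 1 < q) (hd : d ∣ n) (hdn : d < n) :
    q ^ d - 1 ∣ (q ^ n - 1) / ((cyclotomic n ℤ).eval (q : ℤ)).toNat := by
  have hΦ : 0 ≤ (cyclotomic n ℤ).eval (q : ℤ) := (cyclotomic_pos' n (by exact_mod_cast hq)).le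
  have key : ((q : ℤ) ^ d - 1) * (cyclotomic n ℤ).eval (q : ℤ) ∣ (q : ℤ) ^ n - 1 := by
    simpa using eval_dvd (x := (q : ℤ)) (X_pow_sub_one_mul_cyclotomic_dvd_X_pow_sub_one_of_dvd ℤ
      (Nat.mem_properDivisors.mpr ⟨hd, hdn⟩))
  refine Nat.dvd_div_of_mul_dvd ?_
  rw [← Int.natCast_dvd_natCast]
  push_cast [Int.toNat_of_nonneg hΦ, Nat.one_le_pow _ _ (by omega : 0 < q)]
  rwa [mul_comm]

theorem irreducible_factor_of_degree_n_general
    (q n : ℕ)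
    (Fq Fqn : Type) [Field Fq] [Fintype Fq] [Field Fqn] [Fintype Fqn]
    [Algebra Fq Fqn]
    (hq : Fintype.card Fq = q) (hqn : Fintype.card Fqn = q ^ n)
    [NeZero (q ^ n - 1)]
    (h : Polynomial Fq) (L : Subfield Fqn)
    (hL : ∀ x : Fqn, x ≠ 0 → Polynomial.aeval x h ∈ L)
    (S : Polynomial Fq)
    (hS : S = (1 - h ^ Nat.card Lˣ) % (Polynomial.X ^ (q ^ n - 1) - 1))
    (r : ℕ)
    (hr : IsLeastPeriod (fun i : ZMod (q ^ n - 1) => S.coeff i.val) r)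
    (hdvd : ¬ r ∣ (q ^ n - 1) / ((Polynomial.cyclotomic n ℤ).eval (q : ℤ)).toNat) :
    ∃ P : Polynomial Fq, Irreducible P ∧ P.natDegree = n ∧ P ∣ h := by
  by_contra! hno
  set M := (q ^ n - 1) / ((cyclotomic n ℤ).eval (q : ℤ)).toNat
  have hq1 : 1 < q := hq ▸ Fintype.one_lt_card
  have hrank : Module.finrank Fq Fqn = n :=
    Nat.pow_right_injective hq1 <| show q ^ _ = q ^ n by
      rw [← hqn, Module.card_eq_pow_finrank (K := Fq), hq]
  have hvanish (a : Fqn) (ha : a ≠ 0) :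
      (((X ^ M - 1) * (1 - h ^ Nat.card Lˣ)).map (algebraMap Fq Fqn)).eval a = 0 := by
    rw [eval_map_algebraMap, map_mul, mul_eq_zero]
    by_cases hroot : aeval a h = 0
    · left
      have hint := IsIntegral.of_finite Fq a
      have hd : (minpoly Fq a).natDegree ∣ n := hrank ▸ minpoly.degree_dvd hint
      have hdn : (minpoly Fq a).natDegree < n := (hrank ▸ minpoly.natDegree_le a).lt_of_ne
        fun he => hno _ (minpoly.irreducible hint) he (minpoly.dvd Fq a hroot)
      obtain ⟨c, hc⟩ := pow_sub_one_dvd_div_eval_cyclotomic hq1 hd hdn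
      have hpow := FiniteField.pow_natCard_pow_natDegree_minpoly_sub_one_eq_one hint ha
      rw [Nat.card_eq_fintype_card, hq] at hpow
      simp [M, hc, pow_mul, hpow]
    · right
      rw [map_sub, map_one, map_pow, Subfield.pow_natCard_units_eq_one L (hL a ha) hroot, sub_self]
  have hunits : X ^ (q ^ n - 1) - 1 ∣ (X ^ M - 1) * (1 - h ^ Nat.card Lˣ) := by
    rw [← map_dvd_map' (algebraMap Fq Fqn)]
    simpa [hqn] using FiniteField.X_pow_card_sub_one_sub_one_dvd hvanish
  rw [← modByMonic_eq_mod _ (monic_X_pow_sub_one (NeZero.ne _))] at hS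
  exact hdvd (hr.dvd (hS ▸ isPeriodOf_coeff_modByMonic hunits))

/-- Lemma 1.3: if the cyclic sequence of coefficients of
`S(x) = (1 - h(x)^{#Lˣ}) mod (x^{q^n-1} - 1)` has least period `r` with
`r ∤ (q^n-1)/Φ_n(q)`, then `h` has an irreducible factor of degree `n` over `F_q`. -/
theorem irreducible_factor_of_degree_n
    (q n : ℕ) (hn : 2 ≤ n)
    (Fq Fqn : Type) [Field Fq] [Fintype Fq] [Field Fqn] [Fintype Fqn]
    [Algebra Fq Fqn]
    (hq : Fintype.card Fq = q) (hqn : Fintype.card Fqn = q ^ n)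
    [NeZero (q ^ n - 1)]
    (h : Polynomial Fq) (L : Subfield Fqn)
    (hL : ∀ x : Fqn, x ≠ 0 → Polynomial.aeval x h ∈ L)
    (S : Polynomial Fq)
    (hS : S = (1 - h ^ Nat.card Lˣ) % (Polynomial.X ^ (q ^ n - 1) - 1))
    (r : ℕ)
    (hr : IsLeastPeriod (fun i : ZMod (q ^ n - 1) => S.coeff i.val) r)
    (hdvd : ¬ r ∣ (q ^ n - 1) / ((Polynomial.cyclotomic n ℤ).eval (q : ℤ)).toNat) :
    ∃ P : Polynomial Fq, Irreducible P ∧ P.natDegree = n ∧ P ∣ h :=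
  irreducible_factor_of_degree_n_general q n Fq Fqn hq hqn h L hL S hS r hr hdvd
end
end

section
/- Let q be a power of a prime, let N be a positive divisor of q−1, let f : Z/NZ → F_q be a function not identically zero, and let ζ_N be a primitive N-th root of unity in F_q^*. Then the least period of F_{ζ_N}[f] equals N/gcd(N, supp(f)), where gcd(N, supp(f)) denotes the greatest common divisor of N together with the canonical integer representatives of all elements of the support of f. -/
open scoped Classical

noncomputable section

lemma sum_zmod_val {F : Type*} [AddCommMonoid F] {N : ℕ} [NeZero N] (g : ℕ → F) :
    ∑ m : ZMod N, g m.val = ∑ i ∈ Finset.range N, g i := by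
  apply Finset.sum_nbij' (i := fun m => (ZMod.val m)) (j := fun i => (i : ZMod N)) <;>
    simp [ZMod.val_lt, ZMod.val_natCast, ZMod.natCast_val]
  exact fun a ha => Nat.mod_eq_of_lt ha

/-- Character orthogonality sum. -/
lemma sum_pow_val {Fq : Type*} [Field Fq] [Fintype Fq] {N : ℕ} [NeZero N]
    {ζ : Fq} (hζ : IsPrimitiveRoot ζ N) (c : ℕ) :
    ∑ m : ZMod N, ζ ^ (m.val * c) = if N ∣ c then (N : Fq) else 0 := by
  have h1 : ∑ m : ZMod N, ζ ^ (m.val * c) = ∑ i ∈ Finset.range N, (ζ ^ c) ^ i := by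
    rw [sum_zmod_val (g := fun i => ζ ^ (i * c))]
    exact Finset.sum_congr rfl fun i _ => by rw [← pow_mul, mul_comm]
  rw [h1]
  by_cases hdvd : N ∣ c
  · have : ζ ^ c = 1 := hζ.pow_eq_one_iff_dvd c |>.2 hdvd
    simp [this, hdvd]
  · have hne : ζ ^ c ≠ 1 := fun h => hdvd (hζ.pow_eq_one_iff_dvd c |>.1 h)
    have := geom_sum_mul (ζ ^ c) N
    have hz : (ζ ^ c) ^ N - 1 = 0 := by
      rw [← pow_mul, mul_comm, pow_mul, hζ.pow_eq_one, one_pow, sub_self]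
    rw [hz] at this
    have := mul_eq_zero.mp this
    simp only [sub_eq_zero] at this
    rcases this with h | h
    · simp [h, hdvd]
    · exact absurd h hne

/-- Proposition 3.1: the least period of `F_{ζ_N}[f]` is `N / gcd(N, supp f)`. -/
theorem leastPeriod_dft_eq
    (q N : ℕ) (Fq : Type) [Field Fq] [Fintype Fq] (hcard : Fintype.card Fq = q)
    [NeZero N] (hN : N ∣ q - 1)
    (ζ : Fq) (hζ : IsPrimitiveRoot ζ N)
    (f : ZMod N → Fq) (hf : f ≠ 0) :
    IsLeastPeriod (dft ζ f)
      (N / Nat.gcd N ((Finset.univ.filter fun j : ZMod N => f j ≠ 0).gcd ZMod.val)) := by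
  classical
  set S := Finset.univ.filter fun j : ZMod N => f j ≠ 0 with hS
  set G := S.gcd ZMod.val with hG
  set d := Nat.gcd N G with hd
  set r := N / d with hr
  have hN0 : 0 < N := Nat.pos_of_ne_zero (NeZero.ne N)
  have hd0 : 0 < d := Nat.gcd_pos_of_pos_left _ hN0
  have hdN : d ∣ N := Nat.gcd_dvd_left N G
  have hrd : r * d = N := Nat.div_mul_cancel hdN
  have hr0 : 0 < r := Nat.div_pos (Nat.le_of_dvd hN0 hdN) hd0
  have hord : orderOf ζ = N := hζ.eq_orderOf.symm
  have hpow_mod : ∀ a b : ℕ, a ≡ b [MOD N] → ζ ^ a = ζ ^ b := by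
    intro a b hab
    rw [← pow_mod_orderOf ζ a, ← pow_mod_orderOf ζ b, hord, hab]
  -- (N : Fq) ≠ 0
  have hNq : (N : Fq) ≠ 0 := by
    intro h0
    set p := ringChar Fq with hp
    haveI : CharP Fq p := ringChar.charP Fq
    have hpN : p ∣ N := (CharP.cast_eq_zero_iff Fq p N).mp h0
    have hpq : p ∣ q := by
      have : ((Fintype.card Fq : ℕ) : Fq) = 0 := FiniteField.cast_card_eq_zero Fq
      rw [hcard] at this
      exact (CharP.cast_eq_zero_iff Fq p q).mp this
    have hq1 : 0 < q := hcard ▸ Fintype.card_pos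
    have hq1 : 1 ≤ q := hq1
    have h1 : p ∣ q - 1 := hpN.trans hN
    have h2 : p ∣ q - (q - 1) := Nat.dvd_sub hpq h1
    have h3 : q - (q - 1) = 1 := by omega
    rw [h3] at h2
    exact CharP.char_ne_one Fq p (Nat.dvd_one.mp h2)
  -- periodicity of r
  have hper : IsPeriodOf (dft ζ f) r := by
    intro m
    unfold dft
    refine Finset.sum_congr rfl fun j _ => ?_
    by_cases hj : f j = 0
    · simp [hj]
    · have hjS : j ∈ S := by simp [hS, hj]
      have hdj : d ∣ j.val := (Nat.gcd_dvd_right N G).trans (Finset.gcd_dvd hjS)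
      have hrj : N ∣ r * j.val := by
        obtain ⟨k, hk⟩ := hdj
        exact ⟨k, by rw [hk, ← mul_assoc, hrd]⟩
      congr 1
      apply hpow_mod
      have h1 : (m + (r : ZMod N)).val ≡ m.val + r [MOD N] := by
        rw [ZMod.val_add, ZMod.val_natCast]
        exact (Nat.mod_modEq _ N).trans (Nat.ModEq.add_left _ (Nat.mod_modEq r N))
      calc (m + (r : ZMod N)).val * j.val
          ≡ (m.val + r) * j.val [MOD N] := h1.mul_right _
        _ = m.val * j.val + r * j.val := by ring
        _ ≡ m.val * j.val + 0 [MOD N] :=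
            Nat.ModEq.add_left _ ((Nat.modEq_zero_iff_dvd).2 hrj)
        _ = m.val * j.val := by ring
  -- minimality
  have hmin : ∀ s : ℕ, 0 < s → IsPeriodOf (dft ζ f) s → r ≤ s := by
    intro s hs hps
    have key : ∀ j0 ∈ S, N ∣ s * j0.val := by
      intro j0 hj0
      -- difference expansion
      have hdiff : ∀ m : ZMod N,
          ∑ j : ZMod N, f j * (ζ ^ (s * j.val) - 1) * ζ ^ (m.val * j.val) = 0 := by
        intro m
        have h0 := hps m
        unfold dft at h0
        have hexp : ∀ j : ZMod N,
            ζ ^ ((m + (s : ZMod N)).val * j.val)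
              = ζ ^ (s * j.val) * ζ ^ (m.val * j.val) := by
          intro j
          rw [← pow_add]
          apply hpow_mod
          have h1 : (m + (s : ZMod N)).val ≡ m.val + s [MOD N] := by
            rw [ZMod.val_add, ZMod.val_natCast]
            exact (Nat.mod_modEq _ N).trans (Nat.ModEq.add_left _ (Nat.mod_modEq s N))
          calc (m + (s : ZMod N)).val * j.val
              ≡ (m.val + s) * j.val [MOD N] := h1.mul_right _
            _ = s * j.val + m.val * j.val := by ring
        calc ∑ j : ZMod N, f j * (ζ ^ (s * j.val) - 1) * ζ ^ (m.val * j.val)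
            = (∑ j : ZMod N, f j * ζ ^ ((m + (s : ZMod N)).val * j.val))
              - ∑ j : ZMod N, f j * ζ ^ (m.val * j.val) := by
              rw [← Finset.sum_sub_distrib]
              exact Finset.sum_congr rfl fun j _ => by rw [hexp j]; ring
          _ = 0 := by rw [h0]; ring
      -- multiply by ζ^(m.val * (N - j0.val)) and sum over m
      set c : ZMod N → ℕ := fun j => j.val + (N - j0.val) with hc
      have hT : ∑ j : ZMod N, f j * (ζ ^ (s * j.val) - 1)
          * (∑ m : ZMod N, ζ ^ (m.val * c j)) = 0 := by
        calc ∑ j : ZMod N, f j * (ζ ^ (s * j.val) - 1) * ∑ m : ZMod N, ζ ^ (m.val * c j)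
            = ∑ j : ZMod N, ∑ m : ZMod N, f j * (ζ ^ (s * j.val) - 1)
                * ζ ^ (m.val * j.val) * ζ ^ (m.val * (N - j0.val)) := by
              refine Finset.sum_congr rfl fun j _ => ?_
              rw [Finset.mul_sum]
              refine Finset.sum_congr rfl fun m _ => ?_
              conv_rhs => rw [mul_assoc, ← pow_add, ← Nat.mul_add]
          _ = ∑ m : ZMod N, ∑ j : ZMod N, f j * (ζ ^ (s * j.val) - 1)
                * ζ ^ (m.val * j.val) * ζ ^ (m.val * (N - j0.val)) := Finset.sum_comm
          _ = ∑ m : ZMod N, (∑ j : ZMod N, f j * (ζ ^ (s * j.val) - 1)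
                * ζ ^ (m.val * j.val)) * ζ ^ (m.val * (N - j0.val)) := by
              refine Finset.sum_congr rfl fun m _ => ?_
              rw [Finset.sum_mul]
          _ = 0 := Finset.sum_eq_zero fun m _ => by rw [hdiff m, zero_mul]
      have hcdvd : ∀ j : ZMod N, (N ∣ c j ↔ j = j0) := by
        intro j
        have hjv : j.val < N := ZMod.val_lt j
        have hj0v : j0.val < N := ZMod.val_lt j0
        constructor
        · intro hdv
          obtain ⟨k, hk⟩ := hdv
          simp only [hc] at hk
          have hklt : k < 2 := by
            by_contra hk2
            push_neg at hk2
            have h2 : N * 2 ≤ N * k := Nat.mul_le_mul_left N hk2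
            omega
          have : j.val = j0.val := by interval_cases k <;> omega
          exact ZMod.val_injective N this
        · intro h
          have : c j = N := by simp only [hc, h]; omega
          simp [this]
      have hfin : f j0 * (ζ ^ (s * j0.val) - 1) * (N : Fq) = 0 := by
        rw [← hT]
        rw [show (∑ j : ZMod N, f j * (ζ ^ (s * j.val) - 1) * ∑ m : ZMod N, ζ ^ (m.val * c j))
            = ∑ j : ZMod N, f j * (ζ ^ (s * j.val) - 1) * (if j = j0 then (N : Fq) else 0) from
          Finset.sum_congr rfl fun j _ => by
            rw [sum_pow_val hζ (c j), if_congr (hcdvd j) rfl rfl]]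
        rw [Finset.sum_eq_single j0 (fun b _ hb => by simp [hb])
          (fun h => absurd (Finset.mem_univ j0) h)]
        simp
      have hfj0 : f j0 ≠ 0 := by
        simp only [hS, Finset.mem_filter] at hj0; exact hj0.2
      have : ζ ^ (s * j0.val) - 1 = 0 := by
        rcases mul_eq_zero.mp hfin with h | h
        · rcases mul_eq_zero.mp h with h' | h'
          · exact absurd h' hfj0
          · exact h'
        · exact absurd h hNq
      have : ζ ^ (s * j0.val) = 1 := by rwa [sub_eq_zero] at this
      exact (hζ.pow_eq_one_iff_dvd _).mp this
    -- N ∣ s * G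
    have hNsG : N ∣ s * G := by
      have h1 : N ∣ S.gcd fun j => s * j.val :=
        Finset.dvd_gcd fun j hj => key j hj
      rwa [Finset.gcd_mul_left, normalize_eq] at h1
    have hNsd : N ∣ s * d := by
      have h2 : N ∣ Nat.gcd (s * N) (s * G) := Nat.dvd_gcd ⟨s, by ring⟩ hNsG
      rwa [Nat.gcd_mul_left] at h2
    have hrs : r ∣ s := by
      have : r * d ∣ s * d := hrd ▸ hNsd
      exact (Nat.mul_dvd_mul_iff_right hd0).mp this
    exact Nat.le_of_dvd hs hrs
  exact ⟨hr0, hper, hmin⟩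
end
end

section
/- Let q be a power of a prime, let N be a positive divisor of q−1, let f : Z/NZ → F_q be a function not identically zero, and let ζ_N be a primitive N-th root of unity in F_q^*. Then the least period of the inverse DFT F_{ζ_N}^{−1}[f] equals the least period of F_{ζ_N}[f], namely N/gcd(N, supp(f)). -/
open scoped Classical

noncomputable section

/-- The inverse DFT based on `ζ`: `F_ζ⁻¹[f] = N⁻¹ F_{ζ⁻¹}[f]`. -/
def idft {F : Type*} [Field F] {N : ℕ} [NeZero N] (ζ : F) (f : ZMod N → F) :
    ZMod N → F :=
  fun m => (N : F)⁻¹ * dft ζ⁻¹ f m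

/-! Shifting the argument of `F_ζ[f]` by `r` multiplies `f` pointwise by `j ↦ ζ^{rj}`. The DFT
matrix `(ζ^{mj})` is a Vandermonde matrix on the distinct nodes `ζ^m`, so the DFT is injective and
`r` is a period iff `ζ^{rj} = 1`, i.e. `N ∣ rj`, for every `j` in the support of `f`; this says
exactly that `N / gcd(N, supp f)` divides `r`. The inverse DFT is a nonzero multiple of the DFT
based on the primitive root `ζ⁻¹`, so it has the same periods. -/

theorem Nat.dvd_mul_iff_div_gcd_dvd {n d r : ℕ} (hn : 0 < n) : n ∣ r * d ↔ n / n.gcd d ∣ r := by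
  obtain ⟨n', d', hco, hn', hd'⟩ := Nat.exists_coprime n d
  have hg := Nat.gcd_pos_of_pos_left d hn
  generalize n.gcd d = g at hn' hd' hg ⊢
  subst hn' hd'
  rw [Nat.mul_div_cancel _ hg, ← mul_assoc, Nat.mul_dvd_mul_iff_right hg]
  exact hco.dvd_mul_right

theorem Finset.dvd_mul_gcd_iff {ι : Type*} (s : Finset ι) (g : ι → ℕ) (n r : ℕ) :
    n ∣ r * s.gcd g ↔ ∀ i ∈ s, n ∣ r * g i := by
  rw [← Finset.dvd_gcd_iff, Finset.gcd_mul_left, normalize_eq]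

theorem ZMod.val_finEquiv {N : ℕ} [NeZero N] (i : Fin N) : (ZMod.finEquiv N i).val = i := by
  cases N with
  | zero => exact absurd rfl (NeZero.ne 0)
  | succ n => rfl

theorem pow_eq_pow_of_natCast_eq_natCast {M : Type*} [Monoid M] {N : ℕ} {ζ : M}
    (hζ : ζ ^ N = 1) {a b : ℕ} (h : (a : ZMod N) = b) : ζ ^ a = ζ ^ b := by
  rw [ZMod.natCast_eq_natCast_iff'] at h
  rw [← Nat.mod_add_div a N, ← Nat.mod_add_div b N, pow_add, pow_add, pow_mul, pow_mul, hζ, h,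
    one_pow, one_pow]

section Periods

variable {N : ℕ} {α : Type*}

theorem IsLeastPeriod.of_isPeriodOf_iff_dvd {g : ZMod N → α} {P : ℕ} (hP : 0 < P)
    (h : ∀ r, IsPeriodOf g r ↔ P ∣ r) : IsLeastPeriod g P :=
  ⟨hP, (h P).mpr dvd_rfl, fun _ hs hgs => Nat.le_of_dvd hs ((h _).mp hgs)⟩

theorem isPeriodOf_const_mul_iff [MonoidWithZero α] [IsLeftCancelMulZero α] {g : ZMod N → α}
    {c : α} (hc : c ≠ 0) (r : ℕ) : IsPeriodOf (fun m => c * g m) r ↔ IsPeriodOf g r := by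
  simp only [IsPeriodOf, mul_right_inj' hc]

end Periods

section DFT

variable {F : Type*} [CommRing F] {N : ℕ} [NeZero N] {ζ : F}

theorem dft_add_natCast (hζ : ζ ^ N = 1) (f : ZMod N → F) (r : ℕ) (m : ZMod N) :
    dft ζ f (m + r) = dft ζ (fun j => ζ ^ (r * j.val) * f j) m := by
  refine Finset.sum_congr rfl fun j _ => ?_
  rw [pow_eq_pow_of_natCast_eq_natCast hζ (b := m.val * j.val + r * j.val)
    (by push_cast; simp [add_mul]), pow_add]
  ring

variable [IsDomain F]

theorem dft_eq_zero_iff (hζ : IsPrimitiveRoot ζ N) {g : ZMod N → F} : dft ζ g = 0 ↔ g = 0 := by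
  refine ⟨fun h => ?_, fun h => by ext m; simp [dft, h]⟩
  let e := (ZMod.finEquiv N).toEquiv
  have hge : g ∘ e = 0 := by
    refine Matrix.eq_zero_of_forall_index_sum_mul_pow_eq_zero (f := fun i : Fin N => ζ ^ (i : ℕ))
      (fun i j hij => Fin.ext (hζ.pow_inj i.isLt j.isLt hij)) fun m => ?_
    have hm := congrFun h (e m)
    rw [dft, Pi.zero_apply, ← e.sum_comp] at hm
    simpa [e, ZMod.val_finEquiv, ← pow_mul] using hm
  funext m
  simpa using congrFun hge (e.symm m)

theorem dft_injective (hζ : IsPrimitiveRoot ζ N) : Function.Injective (dft (N := N) ζ) := by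
  intro g h hgh
  have hsub : dft ζ (g - h) = 0 := by
    ext m
    simpa [dft, sub_mul, Finset.sum_sub_distrib, sub_eq_zero] using congrFun hgh m
  exact sub_eq_zero.mp ((dft_eq_zero_iff hζ).mp hsub)

theorem isPeriodOf_dft_iff (hζ : IsPrimitiveRoot ζ N) (f : ZMod N → F) (r : ℕ) :
    IsPeriodOf (dft ζ f) r ↔ ∀ j, f j ≠ 0 → N ∣ r * j.val := by
  have hshift : IsPeriodOf (dft ζ f) r ↔ (fun j => ζ ^ (r * j.val) * f j) = f := by
    rw [← (dft_injective hζ).eq_iff, funext_iff]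
    simp only [IsPeriodOf, dft_add_natCast hζ.pow_eq_one]
  rw [hshift, funext_iff]
  refine forall_congr' fun j => ?_
  rw [← hζ.pow_eq_one_iff_dvd, mul_left_eq_self₀]
  tauto

theorem isPeriodOf_dft_iff_dvd (hζ : IsPrimitiveRoot ζ N) (f : ZMod N → F) (r : ℕ) :
    IsPeriodOf (dft ζ f) r ↔
      N / N.gcd ((Finset.univ.filter fun j : ZMod N => f j ≠ 0).gcd ZMod.val) ∣ r := by
  rw [isPeriodOf_dft_iff hζ, ← Nat.dvd_mul_iff_div_gcd_dvd (NeZero.pos N),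
    Finset.dvd_mul_gcd_iff]
  simp

end DFT

theorem isPeriodOf_idft_iff {F : Type*} [Field F] {N : ℕ} [NeZero N] {ζ : F}
    (hζ : IsPrimitiveRoot ζ N) (f : ZMod N → F) (r : ℕ) :
    IsPeriodOf (idft ζ f) r ↔ IsPeriodOf (dft ζ⁻¹ f) r :=
  have := hζ.neZero'
  isPeriodOf_const_mul_iff (inv_ne_zero (NeZero.ne _)) r

theorem leastPeriod_idft_eq_general
    (N : ℕ) (Fq : Type) [Field Fq]
    [NeZero N]
    (ζ : Fq) (hζ : IsPrimitiveRoot ζ N)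
    (f : ZMod N → Fq) :
    IsLeastPeriod (idft ζ f)
        (N / Nat.gcd N ((Finset.univ.filter fun j : ZMod N => f j ≠ 0).gcd ZMod.val)) ∧
      IsLeastPeriod (dft ζ f)
        (N / Nat.gcd N ((Finset.univ.filter fun j : ZMod N => f j ≠ 0).gcd ZMod.val)) := by
  have hP : 0 < N / N.gcd ((Finset.univ.filter fun j : ZMod N => f j ≠ 0).gcd ZMod.val) :=
    Nat.div_pos (Nat.gcd_le_left _ (NeZero.pos N)) (Nat.gcd_pos_of_pos_left _ (NeZero.pos N))
  refine ⟨.of_isPeriodOf_iff_dvd hP fun r => ?_,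
    .of_isPeriodOf_iff_dvd hP (isPeriodOf_dft_iff_dvd hζ f)⟩
  rw [isPeriodOf_idft_iff hζ, isPeriodOf_dft_iff_dvd hζ.inv]

/-- Proposition 3.1 (inverse DFT part): the least period of the inverse DFT
`F_{ζ_N}⁻¹[f]` equals the least period of `F_{ζ_N}[f]`,
namely `N / gcd(N, supp f)`. -/
theorem leastPeriod_idft_eq
    (q N : ℕ) (Fq : Type) [Field Fq] [Fintype Fq] (hcard : Fintype.card Fq = q)
    [NeZero N] (hN : N ∣ q - 1)
    (ζ : Fq) (hζ : IsPrimitiveRoot ζ N)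
    (f : ZMod N → Fq) (hf : f ≠ 0) :
    IsLeastPeriod (idft ζ f)
        (N / Nat.gcd N ((Finset.univ.filter fun j : ZMod N => f j ≠ 0).gcd ZMod.val)) ∧
      IsLeastPeriod (dft ζ f)
        (N / Nat.gcd N ((Finset.univ.filter fun j : ZMod N => f j ≠ 0).gcd ZMod.val)) :=
  leastPeriod_idft_eq_general N Fq ζ hζ f
end
end

section
/- Let q ≥ 2 and n ≥ 2 be integers. Then Φ_n(q) = gcd{ (q^n−1)/(q^d−1) : d a positive divisor of n with d < n }, where Φ_n is the n-th cyclotomic polynomial evaluated at q. -/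
open Polynomial Finset

private lemma key_order (p q e : ℕ) (hp : p.Prime) (he : 0 < e)
    (hdvd : (p:ℤ) ∣ (cyclotomic e ℤ).eval (q:ℤ)) :
    e = p ^ (e.factorization p) * orderOf (q : ZMod p) := by
  haveI : Fact p.Prime := ⟨hp⟩
  set k := e.factorization p with hk
  set m := ordCompl[p] e with hm
  have hpm : ¬ p ∣ m := Nat.not_dvd_ordCompl hp he.ne'
  have hme : p ^ k * m = e := Nat.ordProj_mul_ordCompl_eq_self e p
  haveI : NeZero (m : ZMod p) :=
    ⟨fun h => hpm ((ZMod.natCast_eq_zero_iff m p).mp h)⟩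
  have hroot : (cyclotomic e (ZMod p)).IsRoot ((q : ℤ) : ZMod p) := by
    have h1 : (Int.cast ((cyclotomic e ℤ).eval (q:ℤ)) : ZMod p) = 0 :=
      (ZMod.intCast_zmod_eq_zero_iff_dvd _ p).mpr hdvd
    have h2 : (cyclotomic e (ZMod p)).eval (((q:ℤ) : ZMod p)) =
        (Int.cast ((cyclotomic e ℤ).eval (q:ℤ)) : ZMod p) := by
      rw [← map_cyclotomic_int e (ZMod p), Polynomial.eval_map]
      exact Polynomial.eval₂_hom (Int.castRingHom (ZMod p)) (q:ℤ)
    rw [IsRoot.def, h2, h1]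
  rw [← hme] at hroot
  have := (Polynomial.isRoot_cyclotomic_prime_pow_mul_iff_of_charP (m := m) (k := k)
    (p := p)).mp hroot
  have hord : m = orderOf ((q:ℤ) : ZMod p) := this.eq_orderOf
  rw [← hme, hord]
  norm_num

/-- For integers `q ≥ 2` and `n ≥ 2`,
`Φ_n(q) = gcd{ (q^n-1)/(q^d-1) : d ∣ n, 1 ≤ d < n }`. -/
theorem cyclotomic_eval_eq_gcd (q n : ℕ) (hq : 2 ≤ q) (hn : 2 ≤ n) :
    (Polynomial.cyclotomic n ℤ).eval (q : ℤ) =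
      ((n.properDivisors.gcd fun d => (q ^ n - 1) / (q ^ d - 1) : ℕ) : ℤ) := by
  have hq1 : (1:ℤ) < (q:ℤ) := by exact_mod_cast (by omega : 1 < q)
  set x : ℤ := (q:ℤ) with hx
  have hn0 : n ≠ 0 := by omega
  have hpos : ∀ e : ℕ, 0 < (cyclotomic e ℤ).eval x := fun e => cyclotomic_pos' e hq1
  -- the product splitting
  have hsplit : ∀ d ∈ n.properDivisors,
      (x ^ d - 1) * ((cyclotomic n ℤ).eval x *
        ∏ e ∈ (n.divisors \ d.divisors).erase n, (cyclotomic e ℤ).eval x) = x ^ n - 1 := by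
    intro d hd
    obtain ⟨hdvd, hlt⟩ := Nat.mem_properDivisors.mp hd
    have hd0 : d ≠ 0 := fun h => by subst h; simp at hdvd; omega
    have hsub : d.divisors ⊆ n.divisors := Nat.divisors_subset_of_dvd hn0 hdvd
    have hmem : n ∈ n.divisors \ d.divisors := by
      rw [Finset.mem_sdiff, Nat.mem_divisors, Nat.mem_divisors]
      refine ⟨⟨dvd_rfl, hn0⟩, fun h => ?_⟩
      have := Nat.le_of_dvd (Nat.pos_of_ne_zero hd0) h.1
      omega
    have h1 : ∏ e ∈ n.divisors, (cyclotomic e ℤ).eval x = x ^ n - 1 := by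
      have h := congrArg (Polynomial.eval x) (prod_cyclotomic_eq_X_pow_sub_one (n := n) (by omega) ℤ)
      simpa [eval_prod] using h
    have h2 : ∏ e ∈ d.divisors, (cyclotomic e ℤ).eval x = x ^ d - 1 := by
      have h := congrArg (Polynomial.eval x)
        (prod_cyclotomic_eq_X_pow_sub_one (Nat.pos_of_ne_zero hd0) ℤ)
      simpa [eval_prod] using h
    calc (x ^ d - 1) * ((cyclotomic n ℤ).eval x *
          ∏ e ∈ (n.divisors \ d.divisors).erase n, (cyclotomic e ℤ).eval x)
        = (∏ e ∈ n.divisors \ d.divisors, (cyclotomic e ℤ).eval x) *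
          ∏ e ∈ d.divisors, (cyclotomic e ℤ).eval x := by
          rw [h2, Finset.mul_prod_erase (n.divisors \ d.divisors) (fun e => (cyclotomic e ℤ).eval x) hmem]; ring
      _ = x ^ n - 1 := by rw [Finset.prod_sdiff hsub, h1]
  -- c is the natural number Φ_n(q)
  set c : ℕ := ((cyclotomic n ℤ).eval x).toNat with hcdef
  have hcx : (c:ℤ) = (cyclotomic n ℤ).eval x := Int.toNat_of_nonneg (hpos n).le
  have hc0 : c ≠ 0 := by
    intro h; rw [h] at hcx; exact absurd hcx.symm (hpos n).ne'
  -- each term equals c * md with (md:ℤ) the complementary product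
  have hterm : ∀ d ∈ n.properDivisors, ∃ md : ℕ, md ≠ 0 ∧
      (q ^ n - 1) / (q ^ d - 1) = c * md ∧
      (md : ℤ) = ∏ e ∈ (n.divisors \ d.divisors).erase n, (cyclotomic e ℤ).eval x := by
    intro d hd
    obtain ⟨hdvd, hlt⟩ := Nat.mem_properDivisors.mp hd
    have hd0 : d ≠ 0 := fun h => by subst h; simp at hdvd; omega
    have hM : 0 < ∏ e ∈ (n.divisors \ d.divisors).erase n, (cyclotomic e ℤ).eval x :=
      Finset.prod_pos fun e _ => hpos e
    refine ⟨_, ?_, ?_, Int.toNat_of_nonneg hM.le⟩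
    · intro h
      have := Int.toNat_of_nonneg hM.le
      rw [h] at this; exact absurd this.symm hM.ne'
    · have hdvdnat : q ^ d - 1 ∣ q ^ n - 1 := by
        obtain ⟨k, rfl⟩ := hdvd
        rw [pow_mul]
        simpa using Nat.sub_dvd_pow_sub_pow (q ^ d) 1 k
      have hxd : ∀ m : ℕ, ((q ^ m - 1 : ℕ) : ℤ) = x ^ m - 1 := by
        intro m
        rw [Nat.cast_sub (Nat.one_le_pow _ _ (by omega))]; push_cast; ring
      have hne : x ^ d - 1 ≠ 0 := by
        have h2 : (1:ℤ) < x ^ d := by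
          rw [hx]; exact_mod_cast Nat.one_lt_pow hd0 (by omega : 1 < q)
        omega
      have hcast : (((q ^ n - 1) / (q ^ d - 1) : ℕ) : ℤ) = (x ^ n - 1) / (x ^ d - 1) := by
        rw [Int.natCast_div, hxd, hxd]
      have hz : (((q ^ n - 1) / (q ^ d - 1) : ℕ) : ℤ) =
          ((c * ((∏ e ∈ (n.divisors \ d.divisors).erase n,
            (cyclotomic e ℤ).eval x).toNat) : ℕ) : ℤ) := by
        rw [hcast, ← hsplit d hd, Int.mul_ediv_cancel_left _ hne]
        push_cast
        rw [hcx, Int.toNat_of_nonneg hM.le]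
      exact_mod_cast hz
  set G := n.properDivisors.gcd fun d => (q ^ n - 1) / (q ^ d - 1) with hGdef
  -- part A : c ∣ G
  have hA : c ∣ G := by
    refine Finset.dvd_gcd fun d hd => ?_
    obtain ⟨md, _, heq, _⟩ := hterm d hd
    exact heq ▸ Dvd.intro md rfl
  have h1mem : (1:ℕ) ∈ n.properDivisors := Nat.one_mem_properDivisors_iff_one_lt.mpr (by omega)
  have hG0 : G ≠ 0 := by
    intro h
    obtain ⟨md, hmd0, heq, _⟩ := hterm 1 h1mem
    have h2 := Finset.gcd_dvd (f := fun d => (q ^ n - 1) / (q ^ d - 1)) h1mem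
    simp only [← hGdef, h] at h2
    have h3 := Nat.eq_zero_of_zero_dvd h2
    simp only [heq] at h3
    exact Nat.mul_ne_zero hc0 hmd0 h3
  -- part B : G ∣ c
  have hB : G ∣ c := by
    rw [← Nat.factorization_le_iff_dvd hG0 hc0]
    rw [Finsupp.le_def]
    intro p
    by_cases hp : p.Prime
    swap
    · simp [Nat.factorization_eq_zero_of_not_prime _ hp]
    haveI : Fact p.Prime := ⟨hp⟩
    suffices h : ∃ d ∈ n.properDivisors, ∀ e ∈ (n.divisors \ d.divisors).erase n,
        ¬ (p:ℤ) ∣ (cyclotomic e ℤ).eval x by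
      obtain ⟨d, hd, hnd⟩ := h
      obtain ⟨md, hmd0, heq, hmdx⟩ := hterm d hd
      have hGt : G ∣ c * md := heq ▸ Finset.gcd_dvd (f := fun d => (q ^ n - 1) / (q ^ d - 1)) hd
      have hpmd : ¬ p ∣ md := by
        intro h
        have h2 : (p:ℤ) ∣ ∏ e ∈ (n.divisors \ d.divisors).erase n, (cyclotomic e ℤ).eval x :=
          hmdx ▸ Int.natCast_dvd_natCast.mpr h
        obtain ⟨e, he, hpe⟩ :=
          ((Nat.prime_iff_prime_int.mp hp).dvd_finset_prod_iff _).mp h2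
        exact hnd e he hpe
      calc G.factorization p ≤ (c * md).factorization p :=
            (Nat.factorization_le_iff_dvd hG0 (Nat.mul_ne_zero hc0 hmd0)).mpr hGt p
        _ = c.factorization p + md.factorization p := by
            rw [Nat.factorization_mul hc0 hmd0]; rfl
        _ = c.factorization p := by
            rw [Nat.factorization_eq_zero_of_not_dvd hpmd, add_zero]
    -- existence of a good proper divisor d
    by_cases hpq : p ∣ q ^ n - 1
    swap
    · refine ⟨1, h1mem, fun e he hdvd => hpq ?_⟩
      have he' : e ∈ n.divisors := (Finset.mem_sdiff.mp (Finset.mem_erase.mp he).2).1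
      obtain ⟨hedvd, _⟩ := Nat.mem_divisors.mp he'
      have h1 : (p:ℤ) ∣ x ^ e - 1 :=
        hdvd.trans (by
          simpa using Polynomial.eval_dvd (x := x) (cyclotomic.dvd_X_pow_sub_one e ℤ))
      have h2 : (p:ℤ) ∣ x ^ n - 1 := by
        obtain ⟨k, rfl⟩ := hedvd
        rw [pow_mul]
        exact h1.trans (by simpa using sub_dvd_pow_sub_pow (x ^ e) 1 k)
      have h3 : ((q ^ n - 1 : ℕ) : ℤ) = x ^ n - 1 := by
        rw [Nat.cast_sub (Nat.one_le_pow _ _ (by omega))]; push_cast; ring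
      exact_mod_cast (h3 ▸ h2 : (p:ℤ) ∣ ((q ^ n - 1 : ℕ) : ℤ))
    · -- p divides q^n - 1
      have hpq' : ¬ p ∣ q := by
        intro h
        have h1 : p ∣ q ^ n := h.trans (dvd_pow_self q hn0)
        have h2 : q ^ n ≥ 1 := Nat.one_le_pow _ _ (by omega)
        have h3 := Nat.dvd_sub h1 hpq
        have h4 : q ^ n - (q ^ n - 1) = 1 := by omega
        rw [h4] at h3
        exact hp.one_lt.ne' (Nat.dvd_one.mp h3)
      have hu0 : (q : ZMod p) ≠ 0 := by
        rw [Ne, ZMod.natCast_eq_zero_iff]; exact hpq'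
      set r := orderOf ((q : ZMod p)) with hrdef
      have hrp1 : r ∣ p - 1 := orderOf_dvd_of_pow_eq_one (ZMod.pow_card_sub_one_eq_one hu0)
      have hp1 : p - 1 ≠ 0 := by have := hp.two_le; omega
      have hr0 : r ≠ 0 := fun h => hp1 (Nat.eq_zero_of_zero_dvd (h ▸ hrp1))
      have hpr : ¬ p ∣ r := by
        intro h
        have h1 := Nat.le_of_dvd (Nat.pos_of_ne_zero hr0) h
        have h2 := Nat.le_of_dvd (Nat.pos_of_ne_zero hp1) hrp1
        have := hp.two_le
        omega
      have hun : ((q : ZMod p)) ^ n = 1 := by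
        have h0 : ((q ^ n - 1 : ℕ) : ZMod p) = 0 :=
          (ZMod.natCast_eq_zero_iff _ p).mpr hpq
        have h1 : ((q ^ n - 1 : ℕ) : ZMod p) = ((q : ZMod p)) ^ n - 1 := by
          rw [Nat.cast_sub (Nat.one_le_pow _ _ (by omega))]; push_cast; ring
        rw [h1] at h0
        exact sub_eq_zero.mp h0
      have hrn : r ∣ n := orderOf_dvd_of_pow_eq_one hun
      set K := n.factorization p with hK
      have hkey : ∀ e ∈ n.divisors, (p:ℤ) ∣ (cyclotomic e ℤ).eval x →
          ∃ k ≤ K, e = p ^ k * r := by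
        intro e he hdvd
        obtain ⟨hedvd, _⟩ := Nat.mem_divisors.mp he
        have he0 : 0 < e := Nat.pos_of_mem_divisors he
        have hko := key_order p q e hp he0 hdvd
        exact ⟨e.factorization p,
          (Nat.factorization_le_iff_dvd he0.ne' hn0).mpr hedvd p, hko⟩
      have hcop : Nat.Coprime r (p ^ K) :=
        (((Nat.Prime.coprime_iff_not_dvd hp).mpr hpr).symm).pow_right K
      have hDn : r * p ^ K ∣ n :=
        Nat.Coprime.mul_dvd_of_dvd_of_dvd hcop hrn (Nat.ordProj_dvd n p)
      have hD0 : r * p ^ K ≠ 0 := Nat.mul_ne_zero hr0 (pow_ne_zero _ hp.pos.ne')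
      rcases eq_or_lt_of_le (Nat.le_of_dvd (Nat.pos_of_ne_zero hn0) hDn) with hDn' | hDn'
      · -- r * p ^ K = n
        rcases Nat.eq_zero_or_pos K with hK0 | hK1
        · -- K = 0, n = r, take d = 1
          refine ⟨1, h1mem, fun e he hpd => ?_⟩
          rw [Finset.mem_erase, Finset.mem_sdiff] at he
          obtain ⟨hne, hein, _⟩ := he
          obtain ⟨k, hk, hek⟩ := hkey e hein hpd
          have hk0 : k = 0 := by omega
          rw [hk0, pow_zero, one_mul] at hek
          exact hne (by rw [hek, ← hDn', hK0, pow_zero, mul_one])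
        · -- K ≥ 1, take d = r * p ^ (K - 1)
          refine ⟨r * p ^ (K - 1), ?_, fun e he hpd => ?_⟩
          · rw [Nat.mem_properDivisors]
            constructor
            · exact dvd_trans (mul_dvd_mul_left r (pow_dvd_pow p (by omega))) hDn
            · have h5 : p ^ (K - 1) < p ^ K :=
                Nat.pow_lt_pow_right hp.one_lt (by omega)
              calc r * p ^ (K - 1) < r * p ^ K := by gcongr
                _ = n := hDn'
          · rw [Finset.mem_erase, Finset.mem_sdiff] at he
            obtain ⟨hne, hein, henotd⟩ := he
            obtain ⟨k, hk, hek⟩ := hkey e hein hpd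
            have hkK : k ≠ K := fun h => hne (by rw [hek, h, ← hDn', mul_comm])
            have hed : e ∣ r * p ^ (K - 1) := by
              rw [hek, mul_comm]
              exact mul_dvd_mul_left r (pow_dvd_pow p (by omega))
            exact henotd (Nat.mem_divisors.mpr
              ⟨hed, Nat.mul_ne_zero hr0 (pow_ne_zero _ hp.pos.ne')⟩)
      · -- r * p ^ K < n, take d = r * p ^ K
        refine ⟨r * p ^ K, Nat.mem_properDivisors.mpr ⟨hDn, hDn'⟩, fun e he hpd => ?_⟩
        rw [Finset.mem_erase, Finset.mem_sdiff] at he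
        obtain ⟨hne, hein, henotd⟩ := he
        obtain ⟨k, hk, hek⟩ := hkey e hein hpd
        have hed : e ∣ r * p ^ K := by
          rw [hek, mul_comm]
          exact mul_dvd_mul_left r (pow_dvd_pow p hk)
        exact henotd (Nat.mem_divisors.mpr ⟨hed, hD0⟩)
  have : c = G := Nat.dvd_antisymm hA hB
  rw [← hcx, this]
end

section
/- Let q ≥ 2 and n ≥ 2 be integers. Then (q^n−1)/Φ_n(q) = lcm{ q^d−1 : d a positive divisor of n with d < n }, where Φ_n is the n-th cyclotomic polynomial evaluated at q; in particular Φ_n(q) divides q^n−1. -/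
/-!
Write `c d = Φ_d(q)`, so that `q ^ m - 1 = ∏_{d ∣ m} c d`. For every divisor-closed set `s` of
positive integers, `lcm_{d ∈ s} (q ^ d - 1) = ∏_{d ∈ s} c d`. To see this, remove the largest
element `m` of `s`: because `gcd (q ^ a - 1) (q ^ b - 1) = q ^ gcd a b - 1` and `gcd` distributes
over `lcm`, the gcd of `q ^ m - 1` with the lcm over the rest of `s` is the lcm over the proper
divisors of `m`, which by induction is `∏_{d ∣ m, d < m} c d`; then `lcm * gcd = product` leaves
exactly the extra factor `c m`. The theorem is the case where `s` is the set of proper divisors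
of `n`.
-/

open Polynomial

theorem Nat.gcd_lcm_distrib (a b c : ℕ) :
    Nat.gcd a (Nat.lcm b c) = Nat.lcm (Nat.gcd a b) (Nat.gcd a c) := by
  rcases eq_or_ne a 0 with rfl | ha
  · simp
  rcases eq_or_ne b 0 with rfl | hb
  · simpa using (Nat.lcm_eq_left_iff_dvd.mpr (Nat.gcd_dvd_left a c)).symm
  rcases eq_or_ne c 0 with rfl | hc
  · simpa using (Nat.lcm_eq_right_iff_dvd.mpr (Nat.gcd_dvd_left a b)).symm
  refine Nat.eq_of_factorization_eq (gcd_ne_zero_left ha)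
    (lcm_ne_zero (gcd_ne_zero_left ha) (gcd_ne_zero_left ha)) fun p => ?_
  simp only [factorization_gcd, factorization_lcm, ha, hb, hc, lcm_ne_zero, gcd_ne_zero_left,
    ne_eq, not_false_eq_true, Finsupp.inf_apply, Finsupp.sup_apply]
  exact inf_sup_left _ _ _

theorem Nat.gcd_finset_lcm {ι : Type*} (a : ℕ) (s : Finset ι) (f : ι → ℕ) :
    Nat.gcd a (s.lcm f) = s.lcm fun i => Nat.gcd a (f i) := by
  classical
  induction s using Finset.induction_on with
  | empty => simp
  | insert i s hi ih => simp only [Finset.lcm_insert, lcm_eq_nat_lcm, Nat.gcd_lcm_distrib, ih]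

theorem Nat.divisors_subset_properDivisors_of_mem {n d : ℕ} (hd : d ∈ n.properDivisors) :
    d.divisors ⊆ n.properDivisors :=
  Nat.divisors_subset_properDivisors (by rintro rfl; simp at hd) (Nat.mem_properDivisors.1 hd).1
    (Nat.mem_properDivisors.1 hd).2.ne

theorem Nat.gcd_pow_sub_one_finset_lcm (q : ℕ) {m : ℕ} (hm : 0 < m) {s : Finset ℕ}
    (hs : m.properDivisors ⊆ s) (hms : ∀ d ∈ s, ¬ m ∣ d) :
    Nat.gcd (q ^ m - 1) (s.lcm fun d => q ^ d - 1) = m.properDivisors.lcm fun d => q ^ d - 1 := by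
  rw [Nat.gcd_finset_lcm]
  refine Nat.dvd_antisymm (Finset.lcm_dvd fun d hd => ?_) (Finset.lcm_dvd fun e he => ?_)
  · rw [Nat.pow_sub_one_gcd_pow_sub_one]
    refine Finset.dvd_lcm (Nat.mem_properDivisors.2 ⟨Nat.gcd_dvd_left m d, ?_⟩)
    refine (Nat.le_of_dvd hm (Nat.gcd_dvd_left m d)).lt_of_ne fun h => hms d hd ?_
    exact h ▸ Nat.gcd_dvd_right m d
  · have he' : Nat.gcd m e = e := Nat.gcd_eq_right (Nat.mem_properDivisors.1 he).1
    simpa [he'] using Finset.dvd_lcm (f := fun d => Nat.gcd (q ^ m - 1) (q ^ d - 1)) (hs he)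

theorem cyclotomic_eval_toNat_pos {q : ℕ} (hq : 1 < q) (d : ℕ) :
    0 < ((cyclotomic d ℤ).eval (q : ℤ)).toNat :=
  Int.lt_toNat.2 (cyclotomic_pos' d (by exact_mod_cast hq))

theorem cyclotomic_eval_toNat_mul_prod_properDivisors {q : ℕ} (hq : 1 < q) {m : ℕ} (hm : 0 < m) :
    ((cyclotomic m ℤ).eval (q : ℤ)).toNat *
      ∏ d ∈ m.properDivisors, ((cyclotomic d ℤ).eval (q : ℤ)).toNat = q ^ m - 1 := by
  have hcast : ∀ d, (((cyclotomic d ℤ).eval (q : ℤ)).toNat : ℤ) = (cyclotomic d ℤ).eval (q : ℤ) :=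
    fun d => Int.toNat_of_nonneg (cyclotomic_pos' d (by exact_mod_cast hq)).le
  rw [← Finset.prod_cons (f := fun d => ((cyclotomic d ℤ).eval (q : ℤ)).toNat)
    Nat.self_notMem_properDivisors, Nat.cons_self_properDivisors hm.ne']
  zify [Nat.one_le_pow m q (by omega)]
  simp only [hcast, ← eval_prod, prod_cyclotomic_eq_X_pow_sub_one hm, eval_sub, eval_pow, eval_X,
    eval_one]

theorem Finset.not_max'_dvd_of_mem_erase {s : Finset ℕ} (hs0 : 0 ∉ s) (hne : s.Nonempty) {d : ℕ}
    (hd : d ∈ s.erase (s.max' hne)) : ¬ s.max' hne ∣ d := fun hdvd =>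
  Finset.ne_of_mem_erase hd <| le_antisymm (s.le_max' d (Finset.mem_of_mem_erase hd)) <|
    Nat.le_of_dvd (Nat.pos_of_ne_zero fun h => hs0 (h ▸ Finset.mem_of_mem_erase hd)) hdvd

theorem lcm_pow_sub_one_eq_prod_cyclotomic_eval {q : ℕ} (hq : 1 < q) {s : Finset ℕ} (hs0 : 0 ∉ s)
    (hs : ∀ d ∈ s, d.divisors ⊆ s) :
    (s.lcm fun d => q ^ d - 1) = ∏ d ∈ s, ((cyclotomic d ℤ).eval (q : ℤ)).toNat := by
  induction s using Finset.strongInduction with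
  | H s ih =>
  rcases s.eq_empty_or_nonempty with rfl | hne
  · simp
  set m := s.max' hne
  set t := s.erase m
  have hm : m ∈ s := s.max'_mem hne
  have hm0 : 0 < m := Nat.pos_of_ne_zero fun h => hs0 (h ▸ hm)
  have hmt : ∀ d ∈ t, ¬ m ∣ d := fun d hd => Finset.not_max'_dvd_of_mem_erase hs0 hne hd
  have ht : ∀ d ∈ t, d.divisors ⊆ t := fun d hd e he => Finset.mem_erase.2
    ⟨fun h => hmt d hd (h ▸ Nat.dvd_of_mem_divisors he), hs d (Finset.mem_of_mem_erase hd) he⟩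
  have hpt : m.properDivisors ⊆ t := fun e he => Finset.mem_erase.2
    ⟨(Nat.mem_properDivisors.1 he).2.ne,
      hs m hm (Nat.mem_divisors.2 ⟨(Nat.mem_properDivisors.1 he).1, hm0.ne'⟩)⟩
  have ih_t := ih t (Finset.erase_ssubset hm) (fun h => hs0 (Finset.mem_of_mem_erase h)) ht
  have ih_m := ih m.properDivisors (hpt.trans_ssubset (Finset.erase_ssubset hm)) (by simp)
    fun _ => Nat.divisors_subset_properDivisors_of_mem
  rw [← Finset.insert_erase hm, Finset.lcm_insert, Finset.prod_insert (Finset.notMem_erase m s),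
    lcm_eq_nat_lcm]
  have hP : 0 < ∏ d ∈ m.properDivisors, ((cyclotomic d ℤ).eval (q : ℤ)).toNat :=
    Finset.prod_pos fun d _ => cyclotomic_eval_toNat_pos hq d
  refine Nat.eq_of_mul_eq_mul_right hP ?_
  calc Nat.lcm (q ^ m - 1) (t.lcm fun d => q ^ d - 1) * _
      = Nat.lcm (q ^ m - 1) (t.lcm fun d => q ^ d - 1) *
          Nat.gcd (q ^ m - 1) (t.lcm fun d => q ^ d - 1) := by
        rw [Nat.gcd_pow_sub_one_finset_lcm q hm0 hpt hmt, ih_m]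
    _ = (q ^ m - 1) * t.lcm fun d => q ^ d - 1 := by rw [mul_comm, Nat.gcd_mul_lcm]
    _ = _ := by rw [← cyclotomic_eval_toNat_mul_prod_properDivisors hq hm0, ih_t]; ring

/-- For integers `q ≥ 2` and `n ≥ 2`, `Φ_n(q)` divides `q^n - 1` and
`(q^n-1)/Φ_n(q) = lcm{ q^d - 1 : d ∣ n, 1 ≤ d < n }`. -/
theorem pow_sub_one_div_cyclotomic_eval_eq_lcm (q n : ℕ) (hq : 2 ≤ q) (hn : 2 ≤ n) :
    ((Polynomial.cyclotomic n ℤ).eval (q : ℤ)).toNat ∣ q ^ n - 1 ∧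
      (q ^ n - 1) / ((Polynomial.cyclotomic n ℤ).eval (q : ℤ)).toNat =
        n.properDivisors.lcm fun d => q ^ d - 1 := by
  have hfactor := cyclotomic_eval_toNat_mul_prod_properDivisors hq (m := n) (by omega)
  have hlcm := lcm_pow_sub_one_eq_prod_cyclotomic_eval hq (s := n.properDivisors) (by simp)
    fun _ => Nat.divisors_subset_properDivisors_of_mem
  refine ⟨Dvd.intro _ hfactor, ?_⟩
  rw [← hfactor, Nat.mul_div_cancel_left _ (cyclotomic_eval_toNat_pos hq n), hlcm]
end

section
/- Let q be a power of a prime p, let n ≥ 2, let ζ be a primitive element of F_{q^n}, and let w be an integer with 0 ≤ w ≤ n; if q = 2, further assume w ≠ n. Then for every k ∈ Z/(q^n−1)Z, σ_w(ζ^k) = F_ζ[δ_w](k), where δ_w is viewed as taking values in F_{q^n} via the prime field embedding. -/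
/-!
Both sides are sums over the `w`-subsets `s` of `{0, …, n-1}`. The base-`q` expansion
`s ↦ ∑ i ∈ s, q ^ i` is injective, and its values are at most `1 + q + ⋯ + q^(n-1)`, which is
below `q ^ n - 1` unless `q = 2` and `s` is the full set. Hence it maps the `w`-subsets
bijectively onto the canonical representatives of `Ω(w)`, and the DFT of `δ_w` at `k` is the
sum of `(ζ^k)^(∑ i ∈ s, q ^ i)` defining `σ_w(ζ^k)`.
-/

open scoped Classical

noncomputable section

/-- `δ_w : Z/(q^n-1)Z → F`, the characteristic function of the set `Ω(w)` of
elements whose canonical representative is `q^{i_1} + ⋯ + q^{i_w}` for some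
`0 ≤ i_1 < ⋯ < i_w ≤ n-1` (for `w = 0` this is the Kronecker delta at `0`). -/
def deltaFn (F : Type*) [Zero F] [One F] (q n w : ℕ) : ZMod (q ^ n - 1) → F :=
  fun k =>
    if ∃ s ∈ Finset.powersetCard w (Finset.range n), k.val = ∑ i ∈ s, q ^ i then 1
    else 0

/-- The characteristic elementary symmetric function
`σ_w(ξ) = ∑_{0 ≤ i_1 < ⋯ < i_w ≤ n-1} ξ^{q^{i_1} + ⋯ + q^{i_w}}`
(evaluated on `F_{q^n}`). -/
def sigmaFn {F : Type*} [CommRing F] (q n w : ℕ) (ξ : F) : F :=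
  ∑ s ∈ Finset.powersetCard w (Finset.range n), ξ ^ (∑ i ∈ s, q ^ i)

open Finset

namespace Nat

lemma one_lt_of_pow_sub_one_ne_zero {q n : ℕ} (h : q ^ n - 1 ≠ 0) : 1 < q := by
  by_contra! hq
  exact h (Nat.sub_eq_zero_of_le (pow_le_one₀ (zero_le q) hq))

lemma geomSum_le_pow_sub_one {q : ℕ} (hq : 2 ≤ q) (n : ℕ) :
    ∑ i ∈ range n, q ^ i ≤ q ^ n - 1 := by
  rw [← geom_sum_mul_of_one_le (by omega : 1 ≤ q)]
  exact Nat.le_mul_of_pos_right _ (by omega)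

lemma geomSum_lt_pow_sub_one {q n : ℕ} (hq : 3 ≤ q) (hn : n ≠ 0) :
    ∑ i ∈ range n, q ^ i < q ^ n - 1 := by
  have hpos : 0 < ∑ i ∈ range n, q ^ i :=
    Finset.sum_pos (fun i _ => by positivity) (nonempty_range_iff.mpr hn)
  have hq1 : 2 ≤ q - 1 := by omega
  rw [← geom_sum_mul_of_one_le (by omega : 1 ≤ q)]
  nlinarith

lemma sum_pow_lt_pow_sub_one {q n : ℕ} {s : Finset ℕ} (hq : 2 ≤ q) (hn : n ≠ 0)
    (hs : s ⊆ range n) (hq2 : q = 2 → s ≠ range n) :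
    ∑ i ∈ s, q ^ i < q ^ n - 1 := by
  obtain rfl | hne := eq_or_ne s (range n)
  · have : q ≠ 2 := fun h => hq2 h rfl
    exact geomSum_lt_pow_sub_one (by omega) hn
  · obtain ⟨m, hm, hms⟩ := exists_of_ssubset (ssubset_of_subset_of_ne hs hne)
    calc ∑ i ∈ s, q ^ i < ∑ i ∈ range n, q ^ i :=
          sum_lt_sum_of_subset hs hm hms (by positivity) (fun _ _ _ => zero_le _)
      _ ≤ q ^ n - 1 := geomSum_le_pow_sub_one hq n

end Nat

lemma ZMod.sum_ite_exists_val_eq_mul {R ι : Type*} [CommSemiring R] {N : ℕ} [NeZero N]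
    (P : Finset ι) (g : ι → ℕ) (hg : Set.InjOn g P) (hlt : ∀ s ∈ P, g s < N) (F : ℕ → R) :
    ∑ j : ZMod N, (if ∃ s ∈ P, j.val = g s then 1 else 0) * F j.val = ∑ s ∈ P, F (g s) := by
  simp only [ite_mul, one_mul, zero_mul, ← sum_filter]
  symm
  refine sum_bij (fun s _ => (g s : ZMod N)) ?_ ?_ ?_ ?_
  · intro s hs
    exact mem_filter.mpr ⟨mem_univ _, s, hs, ZMod.val_cast_of_lt (hlt s hs)⟩
  · intro s hs t ht h
    have hval := congrArg ZMod.val h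
    rw [ZMod.val_cast_of_lt (hlt s hs), ZMod.val_cast_of_lt (hlt t ht)] at hval
    exact hg hs ht hval
  · intro j hj
    obtain ⟨s, hs, hj⟩ := (mem_filter.mp hj).2
    exact ⟨s, hs, by rw [← hj, ZMod.natCast_zmod_val]⟩
  · intro s hs
    rw [ZMod.val_cast_of_lt (hlt s hs)]

theorem sigma_eq_dft_delta_general
    (q n : ℕ)
    (Fqn : Type) [Field Fqn]
    [NeZero (q ^ n - 1)]
    (ζ : Fqn)
    (w : ℕ) (hq2 : q = 2 → w ≠ n) :
    ∀ k : ZMod (q ^ n - 1),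
      sigmaFn q n w (ζ ^ k.val) =
        ∑ j : ZMod (q ^ n - 1), deltaFn Fqn q n w j * ζ ^ (k.val * j.val) := by
  intro k
  have hN : q ^ n - 1 ≠ 0 := NeZero.ne _
  have hq : 2 ≤ q := Nat.one_lt_of_pow_sub_one_ne_zero hN
  have hn : n ≠ 0 := by rintro rfl; exact hN rfl
  have hlt : ∀ s ∈ powersetCard w (range n), ∑ i ∈ s, q ^ i < q ^ n - 1 := by
    intro s hs
    rw [mem_powersetCard] at hs
    exact Nat.sum_pow_lt_pow_sub_one hq hn hs.1 fun htwo hfull => hq2 htwo (by simp [← hs.2, hfull])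
  unfold sigmaFn deltaFn
  rw [ZMod.sum_ite_exists_val_eq_mul _ _ (Finset.geomSum_injective hq).injOn hlt
    (fun m => ζ ^ (k.val * m))]
  simp only [pow_mul]

/-- Lemma 4.1: for a primitive element `ζ` of `F_{q^n}` and `0 ≤ w ≤ n`
(with `w ≠ n` if `q = 2`), `σ_w(ζ^k) = F_ζ[δ_w](k)` for all `k ∈ Z/(q^n-1)Z`,
where `δ_w` is viewed as taking values in `F_{q^n}`. -/
theorem sigma_eq_dft_delta
    (q n : ℕ) (hn : 2 ≤ n)
    (Fqn : Type) [Field Fqn] [Fintype Fqn] (hqn : Fintype.card Fqn = q ^ n)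
    [NeZero (q ^ n - 1)]
    (ζ : Fqn) (hζ : orderOf ζ = q ^ n - 1)
    (w : ℕ) (hw : w ≤ n) (hq2 : q = 2 → w ≠ n) :
    ∀ k : ZMod (q ^ n - 1),
      sigmaFn q n w (ζ ^ k.val) =
        ∑ j : ZMod (q ^ n - 1), deltaFn Fqn q n w j * ζ ^ (k.val * j.val) :=
  sigma_eq_dft_delta_general q n Fqn ζ w hq2
end
end

section
/- Let q ≥ 2 and n ≥ 1 be integers, let R be a ring, and let f_1, ..., f_s : Z/(q^n−1)Z → R be q-symmetric functions such that for all choices a_k ∈ supp(f_k), 1 ≤ k ≤ s, one has ε_i(a_1) + ... + ε_i(a_s) ≤ q−1 for every 0 ≤ i ≤ n−1. Then the convolution f_1 ⊗ ... ⊗ f_s is q-symmetric. -/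
open scoped Classical

noncomputable section

/-- `ε_i(a)`: the digit of `q^i` in the `q`-adic expansion of `a`. -/
def digit (q i a : ℕ) : ℕ := a / q ^ i % q

/-- `φ_ρ((a_0,…,a_{n-1})_q) = (a_{ρ(0)},…,a_{ρ(n-1)})_q`, permuting the `q`-adic
digits of the canonical representative. -/
def permDigits (q n : ℕ) (ρ : Equiv.Perm (Fin n)) (a : ZMod (q ^ n - 1)) :
    ZMod (q ^ n - 1) :=
  ((∑ i : Fin n, digit q (ρ i) a.val * q ^ (i : ℕ) : ℕ) : ZMod (q ^ n - 1))

/-- A function on `Z/(q^n-1)Z` is `q`-symmetric if it is invariant under all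
permutations of the `q`-adic digits. -/
def QSymmetric {R : Type*} (q n : ℕ) (f : ZMod (q ^ n - 1) → R) : Prop :=
  ∀ (ρ : Equiv.Perm (Fin n)) (a : ZMod (q ^ n - 1)), f (permDigits q n ρ a) = f a

/-- Convolution of functions on `Z/NZ`: `(f ⊗ g)(i) = ∑_{j+k=i} f(j) g(k)`. -/
def conv {N : ℕ} [NeZero N] {R : Type*} [NonUnitalNonAssocSemiring R]
    (f g : ZMod N → R) : ZMod N → R :=
  fun i => ∑ j : ZMod N, f j * g (i - j)

/-- The convolution `f_1 ⊗ ⋯ ⊗ f_s` of a list of functions (the empty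
convolution being the Kronecker delta `δ_0`). -/
def convList {N : ℕ} [NeZero N] {R : Type*} [Semiring R] :
    List (ZMod N → R) → ZMod N → R
  | [] => fun i => if i = 0 then 1 else 0
  | f :: fs => conv f (convList fs)

/-!
A `q`-adic expansion without carries is compatible with addition: if the digit sums
`ε_i(a_1) + ⋯ + ε_i(a_s)` stay below `q`, then the digits of `a_1 + ⋯ + a_s` are those sums,
so permuting digits commutes with the addition, `φ_ρ(a_1 + ⋯ + a_s) = φ_ρ(a_1) + ⋯ + φ_ρ(a_s)`.
Writing `(f_1 ⊗ ⋯ ⊗ f_s)(b)` as a sum over tuples with `a_1 + ⋯ + a_s = b` and reindexing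
along the bijection `φ_ρ` then gives `(f_1 ⊗ ⋯ ⊗ f_s)(φ_ρ b) = (f_1 ⊗ ⋯ ⊗ f_s)(b)`, since only
tuples in `supp f_1 × ⋯ × supp f_s` contribute.
-/

open Finset

section Digits

variable {q : ℕ}

lemma digit_lt (hq : 0 < q) (i a : ℕ) : digit q i a < q :=
  Nat.mod_lt _ hq

lemma digit_zero (q a : ℕ) : digit q 0 a = a % q := by
  simp [digit]

lemma digit_succ (q i a : ℕ) : digit q (i + 1) a = digit q i (a / q) := by
  rw [digit, digit, Nat.div_div_eq_div_mul, ← pow_succ']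

lemma sum_fin_succ_mul_pow {n : ℕ} (c : Fin (n + 1) → ℕ) :
    ∑ i, c i * q ^ (i : ℕ) = c 0 + q * ∑ i : Fin n, c i.succ * q ^ (i : ℕ) := by
  rw [Fin.sum_univ_succ, mul_sum]
  simp only [Fin.val_zero, pow_zero, mul_one, Fin.val_succ, pow_succ']
  congr 1
  exact sum_congr rfl fun _ _ => by ring

lemma sum_digit_mul_pow (q m : ℕ) :
    ∀ n : ℕ, ∑ i : Fin n, digit q i m * q ^ (i : ℕ) = m % q ^ n
  | 0 => by simp [Nat.mod_one]
  | n + 1 => by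
    simp only [sum_fin_succ_mul_pow, Fin.val_succ, digit_succ, sum_digit_mul_pow q (m / q) n,
      Fin.val_zero, digit_zero, pow_succ', Nat.mod_mul]

lemma sum_mul_pow_lt : ∀ {n : ℕ} {c : Fin n → ℕ}, (∀ i, c i < q) →
    ∑ i, c i * q ^ (i : ℕ) < q ^ n
  | 0, _, _ => by simp
  | n + 1, c, hc => by
    have h := sum_mul_pow_lt (c := fun i : Fin n => c i.succ) fun i => hc i.succ
    rw [sum_fin_succ_mul_pow, pow_succ']
    nlinarith [hc 0]

lemma digit_sum_mul_pow : ∀ {n : ℕ} {c : Fin n → ℕ}, (∀ i, c i < q) → ∀ j : Fin n,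
    digit q j (∑ i, c i * q ^ (i : ℕ)) = c j
  | n + 1, c, hc, j => by
    have hc0 : c 0 / q = 0 := Nat.div_eq_of_lt (hc 0)
    rw [sum_fin_succ_mul_pow]
    cases j using Fin.cases with
    | zero => rw [Fin.val_zero, digit_zero, Nat.add_mul_mod_self_left, Nat.mod_eq_of_lt (hc 0)]
    | succ j =>
      rw [Fin.val_succ, digit_succ, Nat.add_mul_div_left _ _ (Nat.zero_lt_of_lt (hc 0)), hc0,
        zero_add, digit_sum_mul_pow (fun i => hc i.succ) j]

lemma sum_sub_one_mul_pow (hq : 0 < q) (n : ℕ) :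
    ∑ i : Fin n, (q - 1) * q ^ (i : ℕ) = q ^ n - 1 := by
  rw [← mul_sum, Fin.sum_univ_eq_sum_range (q ^ ·), mul_comm, geom_sum_mul_of_one_le hq]

lemma digit_pow_sub_one (hq : 0 < q) {n : ℕ} (i : Fin n) : digit q i (q ^ n - 1) = q - 1 := by
  rw [← sum_sub_one_mul_pow hq, digit_sum_mul_pow (fun _ => by omega)]

lemma pos_of_pow_sub_one_ne_zero {n : ℕ} (h : q ^ n - 1 ≠ 0) : 0 < q := by
  rcases Nat.eq_zero_or_pos q with rfl | hq
  · cases n <;> simp at h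
  · exact hq

end Digits

section PermDigits

variable {q n : ℕ} [NeZero (q ^ n - 1)]

lemma sum_digit_val_mul_pow (a : ZMod (q ^ n - 1)) :
    ∑ i : Fin n, digit q i a.val * q ^ (i : ℕ) = a.val := by
  rw [sum_digit_mul_pow, Nat.mod_eq_of_lt (by have := ZMod.val_lt a; omega)]

/-- The only `m < q ^ n` whose digits differ from those of `(m : ZMod (q ^ n - 1)).val` is
`m = q ^ n - 1`; all its digits are `q - 1`, so every permutation of them gives `q ^ n - 1 ≡ 0` again. -/
lemma permDigits_natCast (ρ : Equiv.Perm (Fin n)) {m : ℕ} (hm : m < q ^ n) :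
    permDigits q n ρ m = ((∑ i : Fin n, digit q (ρ i) m * q ^ (i : ℕ) : ℕ) : ZMod (q ^ n - 1)) := by
  rcases Nat.lt_or_ge m (q ^ n - 1) with h | h
  · rw [permDigits, ZMod.val_natCast_of_lt h]
  · obtain rfl : m = q ^ n - 1 := by omega
    have hq := pos_of_pow_sub_one_ne_zero (NeZero.ne (q ^ n - 1))
    simp only [ZMod.natCast_self, digit_pow_sub_one hq, sum_sub_one_mul_pow hq]
    simp [permDigits, digit]

lemma permDigits_permDigits (ρ ρ' : Equiv.Perm (Fin n)) (a : ZMod (q ^ n - 1)) :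
    permDigits q n ρ' (permDigits q n ρ a) = permDigits q n (ρ * ρ') a := by
  have hq := pos_of_pow_sub_one_ne_zero (NeZero.ne (q ^ n - 1))
  rw [permDigits.eq_1 q n ρ a, permDigits_natCast ρ' (sum_mul_pow_lt fun _ => digit_lt hq _ _)]
  simp only [digit_sum_mul_pow (fun _ => digit_lt hq _ _)]
  rfl

lemma permDigits_one (a : ZMod (q ^ n - 1)) : permDigits q n 1 a = a := by
  simp only [permDigits, Equiv.Perm.coe_one, id_eq, sum_digit_val_mul_pow, ZMod.natCast_zmod_val]

def permDigitsEquiv (ρ : Equiv.Perm (Fin n)) : Equiv.Perm (ZMod (q ^ n - 1)) where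
  toFun := permDigits q n ρ
  invFun := permDigits q n ρ⁻¹
  left_inv a := by rw [permDigits_permDigits, mul_inv_cancel, permDigits_one]
  right_inv a := by rw [permDigits_permDigits, inv_mul_cancel, permDigits_one]

lemma permDigits_sum {ι : Type*} [Fintype ι] (ρ : Equiv.Perm (Fin n)) (a : ι → ZMod (q ^ n - 1))
    (h : ∀ i < n, ∑ k, digit q i (a k).val ≤ q - 1) :
    permDigits q n ρ (∑ k, a k) = ∑ k, permDigits q n ρ (a k) := by
  have hq := pos_of_pow_sub_one_ne_zero (NeZero.ne (q ^ n - 1))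
  set c : Fin n → ℕ := fun i => ∑ k, digit q i (a k).val
  have hc : ∀ i, c i < q := fun i => Nat.lt_of_le_pred hq (h i i.isLt)
  have hval : ∑ k, (a k).val = ∑ i, c i * q ^ (i : ℕ) := by
    simp only [c, sum_mul]
    rw [sum_comm]
    simp only [sum_digit_val_mul_pow]
  calc permDigits q n ρ (∑ k, a k)
      = permDigits q n ρ ((∑ i, c i * q ^ (i : ℕ) : ℕ) : ZMod (q ^ n - 1)) := by
        simp only [← hval, Nat.cast_sum, ZMod.natCast_zmod_val]
    _ = ((∑ i : Fin n, c (ρ i) * q ^ (i : ℕ) : ℕ) : ZMod (q ^ n - 1)) := by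
        rw [permDigits_natCast ρ (sum_mul_pow_lt hc)]
        simp only [digit_sum_mul_pow hc]
    _ = ∑ k, permDigits q n ρ (a k) := by
        simp only [permDigits, c, sum_mul, ← Nat.cast_sum]
        rw [sum_comm]

end PermDigits

section Convolution

variable {N : ℕ} [NeZero N] {R : Type*} [Semiring R]

lemma convList_ofFn_apply : ∀ {s : ℕ} (f : Fin s → ZMod N → R) (b : ZMod N),
    convList (List.ofFn f) b =
      ∑ a : Fin s → ZMod N, if ∑ k, a k = b then (List.ofFn fun k => f k (a k)).prod else 0
  | 0, f, b => by
    simp [convList, eq_comm]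
  | s + 1, f, b => by
    rw [List.ofFn_succ, convList, conv, ← (Fin.consEquiv fun _ => ZMod N).sum_comp,
      Fintype.sum_prod_type]
    refine sum_congr rfl fun x _ => ?_
    rw [convList_ofFn_apply, mul_sum]
    refine sum_congr rfl fun y _ => ?_
    simp only [Fin.consEquiv_apply, Fin.sum_univ_succ, Fin.cons_zero, Fin.cons_succ,
      List.ofFn_succ, List.prod_cons, mul_ite, mul_zero]
    exact if_congr eq_sub_iff_add_eq' rfl rfl

lemma convList_ofFn_apply_perm {s : ℕ} (f : Fin s → ZMod N → R) (e : Equiv.Perm (ZMod N))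
    (hf : ∀ k x, f k (e x) = f k x)
    (he : ∀ a : Fin s → ZMod N, (∀ k, f k (a k) ≠ 0) → e (∑ k, a k) = ∑ k, e (a k))
    (b : ZMod N) :
    convList (List.ofFn f) (e b) = convList (List.ofFn f) b := by
  rw [convList_ofFn_apply, convList_ofFn_apply, ← (Equiv.piCongrRight fun _ => e).sum_comp]
  refine sum_congr rfl fun a _ => ?_
  simp only [Equiv.piCongrRight_apply, Pi.map_apply, hf]
  by_cases ha : ∀ k, f k (a k) ≠ 0
  · simp only [← he a ha, e.apply_eq_iff_eq]
  · push Not at ha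
    obtain ⟨k, hk⟩ := ha
    have h0 : (List.ofFn fun k => f k (a k)).prod = 0 :=
      List.prod_eq_zero (List.mem_ofFn.mpr ⟨k, hk⟩)
    simp [h0]

end Convolution

theorem convList_qSymmetric_general
    (q n s : ℕ) [NeZero (q ^ n - 1)]
    (R : Type) [Ring R] (f : Fin s → ZMod (q ^ n - 1) → R)
    (hsym : ∀ k : Fin s, QSymmetric q n (f k))
    (hsupp : ∀ a : Fin s → ZMod (q ^ n - 1), (∀ k, f k (a k) ≠ 0) →
      ∀ i < n, (∑ k : Fin s, digit q i (a k).val) ≤ q - 1) :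
    QSymmetric q n (convList (List.ofFn f)) := fun ρ b =>
  convList_ofFn_apply_perm f (permDigitsEquiv ρ) (fun k => hsym k ρ)
    (fun a ha => permDigits_sum ρ a (hsupp a ha)) b

/-- Lemma 4.3: if `f_1, …, f_s` are `q`-symmetric functions on `Z/(q^n-1)Z`
such that for all `a_k ∈ supp(f_k)` one has `ε_i(a_1) + ⋯ + ε_i(a_s) ≤ q - 1`
for every `0 ≤ i ≤ n-1`, then `f_1 ⊗ ⋯ ⊗ f_s` is `q`-symmetric. -/
theorem convList_qSymmetric
    (q n s : ℕ) (hq : 2 ≤ q) (hn : 1 ≤ n) [NeZero (q ^ n - 1)]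
    (R : Type) [Ring R] (f : Fin s → ZMod (q ^ n - 1) → R)
    (hsym : ∀ k : Fin s, QSymmetric q n (f k))
    (hsupp : ∀ a : Fin s → ZMod (q ^ n - 1), (∀ k, f k (a k) ≠ 0) →
      ∀ i < n, (∑ k : Fin s, digit q i (a k).val) ≤ q - 1) :
    QSymmetric q n (convList (List.ofFn f)) :=
  convList_qSymmetric_general q n s R f hsym hsupp
end
end

section
/- Let q be an odd prime power and n = 2. Then the function Δ_{1,0} = δ_0 − δ_1^{⊗(q−1)} : Z/(q^2−1)Z → F_q has least period r satisfying r > q−1. -/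
open scoped Classical

noncomputable section

/-- The `m`-th convolution power `f^{⊗m}`, with `f^{⊗0} = δ_0`. -/
def convPow {N : ℕ} [NeZero N] {R : Type*} [Semiring R] (f : ZMod N → R) :
    ℕ → ZMod N → R
  | 0 => fun i => if i = 0 then 1 else 0
  | m + 1 => conv f (convPow f m)

/-- `Δ_{w,c} = δ_0 - ((-1)^w δ_w - c δ_0)^{⊗(q-1)} : Z/(q^n-1)Z → F_q`. -/
def Delta (F : Type*) [Field F] (q n w : ℕ) [NeZero (q ^ n - 1)] (c : F) :
    ZMod (q ^ n - 1) → F :=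
  fun i => deltaFn F q n 0 i -
    convPow (fun k => (-1 : F) ^ w * deltaFn F q n w k - c * deltaFn F q n 0 k)
      (q - 1) i

set_option linter.unusedSectionVars false

section Aux
variable (q : ℕ) (Fq : Type) [Field Fq] [NeZero (q ^ 2 - 1)]

-- basic cast facts
lemma natCast_val_self {N : ℕ} [NeZero N] (a : ZMod N) : ((a.val : ℕ) : ZMod N) = a := by
  simp [ZMod.natCast_val, ZMod.cast_id]

lemma val_eq_iff {N : ℕ} [NeZero N] (a : ZMod N) (b : ℕ) (hb : b < N) :
    a.val = b ↔ a = (b : ZMod N) := by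
  constructor
  · intro h; rw [← h, natCast_val_self]
  · intro h; rw [h, ZMod.val_cast_of_lt hb]

lemma deltaFn1_eq (k : ZMod (q ^ 2 - 1)) :
    deltaFn Fq q 2 1 k = if k.val = 1 ∨ k.val = q then 1 else 0 := by
  unfold deltaFn
  refine if_congr ?_ rfl rfl
  constructor
  · rintro ⟨s, hs, hval⟩
    rw [Finset.mem_powersetCard] at hs
    obtain ⟨i, rfl⟩ := Finset.card_eq_one.mp hs.2
    have hi : i ∈ Finset.range 2 := hs.1 (Finset.mem_singleton_self i)
    rw [Finset.sum_singleton] at hval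
    rw [Finset.mem_range] at hi
    interval_cases i
    · left; simpa using hval
    · right; simpa using hval
  · rintro (h | h)
    · exact ⟨{0}, by simp [Finset.mem_powersetCard], by simpa using h⟩
    · exact ⟨{1}, by simp [Finset.mem_powersetCard], by simpa using h⟩

omit [NeZero (q ^ 2 - 1)] in
lemma deltaFn0_eq (k : ZMod (q ^ 2 - 1)) :
    deltaFn Fq q 2 0 k = if k = 0 then 1 else 0 := by
  unfold deltaFn
  refine if_congr ?_ rfl rfl
  simp [ZMod.val_eq_zero]

lemma convPow_support (hq : 3 ≤ q) {m : ℕ} (hm : m ≤ q - 1)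
    (i : ZMod (q ^ 2 - 1)) (hi : convPow (deltaFn Fq q 2 1) m i ≠ 0) :
    ∃ j ≤ m, i.val = m + j * (q - 1) := by
  obtain ⟨p, rfl⟩ : ∃ p, q = p + 3 := ⟨q - 3, by omega⟩
  have hsq : (p + 3) ^ 2 = p * p + 6 * p + 9 := by ring
  induction m generalizing i with
  | zero =>
    refine ⟨0, le_refl 0, ?_⟩
    simp only [convPow] at hi
    have : i = 0 := by by_contra h; simp [h] at hi
    simp [this]
  | succ m ih =>
    simp only [convPow, conv] at hi
    obtain ⟨j, -, hj⟩ := Finset.exists_ne_zero_of_sum_ne_zero hi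
    have hfj : deltaFn Fq (p+3) 2 1 j ≠ 0 := fun h => hj (by simp [h])
    have hcj : convPow (deltaFn Fq (p+3) 2 1) m (i - j) ≠ 0 := fun h => hj (by simp [h])
    rw [deltaFn1_eq] at hfj
    have hjval : j.val = 1 ∨ j.val = p + 3 := by
      by_contra h; push_neg at h; simp [h.1, h.2] at hfj
    obtain ⟨j', hj', hval⟩ := ih (by omega) (i - j) hcj
    have hieq : i = (i - j) + j := by ring
    have hivaldec : i.val = ((i - j).val + j.val) % ((p+3)^2 - 1) := by
      nth_rewrite 1 [hieq]; exact ZMod.val_add _ _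
    have hjb : j' * (p + 2) ≤ m * (p + 2) := Nat.mul_le_mul_right _ hj'
    have hmb : m * (p + 2) ≤ (p + 1) * (p + 2) := Nat.mul_le_mul_right _ (by omega)
    have hpp : (p + 1) * (p + 2) = p * p + 3 * p + 2 := by ring
    have hq1 : (p + 3) - 1 = p + 2 := by omega
    rw [hq1] at hval ⊢
    rcases hjval with h1 | h1
    · refine ⟨j', by omega, ?_⟩
      rw [hivaldec, hval, h1, Nat.mod_eq_of_lt (by omega)]
      omega
    · refine ⟨j' + 1, by omega, ?_⟩
      have hexp : (j' + 1) * (p + 2) = j' * (p + 2) + (p + 2) := by ring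
      rw [hivaldec, hval, h1, Nat.mod_eq_of_lt (by omega)]
      omega

end Aux

section Aux2
variable (q : ℕ) (Fq : Type) [Field Fq] [NeZero (q ^ 2 - 1)]

lemma convPow_val (hq : 3 ≤ q) {m : ℕ} (hm : m ≤ q - 1) :
    convPow (deltaFn Fq q 2 1) m ((m : ℕ) : ZMod (q ^ 2 - 1)) = 1 := by
  obtain ⟨p, rfl⟩ : ∃ p, q = p + 3 := ⟨q - 3, by omega⟩
  have hsq : (p + 3) ^ 2 = p * p + 6 * p + 9 := by ring
  have hmul : (p + 3) * (p + 2) = p * p + 5 * p + 6 := by ring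
  induction m with
  | zero => simp [convPow]
  | succ m ih =>
    have hm' : m ≤ p + 3 - 1 := by omega
    set N := (p + 3) ^ 2 - 1 with hN
    set o : ZMod N := ((1 : ℕ) : ZMod N) with ho
    set Q : ZMod N := (((p + 3) : ℕ) : ZMod N) with hQ
    have hoval : o.val = 1 := ZMod.val_cast_of_lt (by omega)
    have hQval : Q.val = p + 3 := ZMod.val_cast_of_lt (by omega)
    have hoQ : o ≠ Q := fun h => by rw [h, hQval] at hoval; omega
    simp only [convPow, conv]
    have hrw : ∀ j : ZMod N,
        deltaFn Fq (p+3) 2 1 j * convPow (deltaFn Fq (p+3) 2 1) m (((m+1 : ℕ) : ZMod N) - j)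
        = if j ∈ ({o, Q} : Finset (ZMod N)) then
            convPow (deltaFn Fq (p+3) 2 1) m (((m+1 : ℕ) : ZMod N) - j) else 0 := by
      intro j
      rw [deltaFn1_eq]
      have : (j.val = 1 ∨ j.val = p + 3) ↔ j ∈ ({o, Q} : Finset (ZMod N)) := by
        rw [Finset.mem_insert, Finset.mem_singleton,
          val_eq_iff j 1 (by omega), val_eq_iff j (p+3) (by omega)]
      split_ifs with h1 h2 h2
      · rw [one_mul]
      · exact absurd (this.mp h1) h2
      · exact absurd (this.mpr h2) h1
      · rw [zero_mul]
    rw [Finset.sum_congr rfl (fun j _ => hrw j), Finset.sum_ite_mem, Finset.univ_inter,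
      Finset.sum_pair hoQ]
    have e1 : ((m + 1 : ℕ) : ZMod N) - o = ((m : ℕ) : ZMod N) := by
      rw [ho]; push_cast; ring
    have hX : ((m + 1 : ℕ) : ZMod N) - Q = (((p+3)*(p+2) + m : ℕ) : ZMod N) := by
      rw [sub_eq_iff_eq_add, hQ]
      have h1 : ((p+3)*(p+2) + m + (p+3) : ℕ) = N + (m+1) := by rw [hN]; omega
      calc ((m + 1 : ℕ) : ZMod N) = ((N + (m+1) : ℕ) : ZMod N) := by
            push_cast [ZMod.natCast_self]; ring
        _ = (((p+3)*(p+2) + m + (p+3) : ℕ) : ZMod N) := by rw [h1]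
        _ = (((p+3)*(p+2) + m : ℕ) : ZMod N) + (((p+3) : ℕ) : ZMod N) := by push_cast; ring
    have hXzero : convPow (deltaFn Fq (p+3) 2 1) m (((m + 1 : ℕ) : ZMod N) - Q) = 0 := by
      by_contra hne
      obtain ⟨j', hj', hval⟩ := convPow_support (p+3) Fq hq hm' _ hne
      rw [hX, ZMod.val_cast_of_lt (by omega)] at hval
      have hjb : j' * (p + 2) ≤ m * (p + 2) := Nat.mul_le_mul_right _ hj'
      have hmb : m * (p + 2) ≤ (p + 1) * (p + 2) := Nat.mul_le_mul_right _ (by omega)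
      have hpp : (p + 1) * (p + 2) = p * p + 3 * p + 2 := by ring
      have hq1 : (p + 3) - 1 = p + 2 := by omega
      rw [hq1] at hval
      omega
    rw [e1, ih (by omega), hXzero]; norm_num
end Aux2



/-- Lemma 5.1 (iii): for `q` an odd prime power and `n = 2`, the least period
`r` of `Δ_{1,0} = δ_0 - δ_1^{⊗(q-1)} : Z/(q^2-1)Z → F_q` satisfies `r > q - 1`. -/
theorem Delta_one_leastPeriod_gt
    (q : ℕ) (Fq : Type) [Field Fq] [Fintype Fq] (hcard : Fintype.card Fq = q)
    (hodd : Odd q)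
    [NeZero (q ^ 2 - 1)]
    (r : ℕ)
    (hr : IsLeastPeriod
      (fun i : ZMod (q ^ 2 - 1) =>
        deltaFn Fq q 2 0 i - convPow (deltaFn Fq q 2 1) (q - 1) i) r) :
    q - 1 < r := by
  obtain ⟨hrpos, hper, -⟩ := hr
  by_contra hle
  push_neg at hle
  have h2 : 2 ≤ q := hcard ▸ Fintype.one_lt_card
  have hq : 3 ≤ q := by obtain ⟨k, hk⟩ := hodd; omega
  have hpow : q ^ 2 = q * q := by ring
  have hge : 3 * q ≤ q * q := Nat.mul_le_mul_right q hq
  have hNbig : q - 1 < q ^ 2 - 1 := by omega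
  have key := hper 0
  simp only [zero_add] at key
  -- g 0 = 1
  have hc0 : convPow (deltaFn Fq q 2 1) (q - 1) (0 : ZMod (q ^ 2 - 1)) = 0 := by
    by_contra hne
    obtain ⟨j, hj, hval⟩ := convPow_support q Fq hq (le_refl _) _ hne
    rw [ZMod.val_zero] at hval
    omega
  have hg0 : deltaFn Fq q 2 0 (0 : ZMod (q ^ 2 - 1))
      - convPow (deltaFn Fq q 2 1) (q - 1) 0 = 1 := by
    rw [deltaFn0_eq, if_pos rfl, hc0, sub_zero]
  have hrval : ((r : ℕ) : ZMod (q ^ 2 - 1)).val = r :=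
    ZMod.val_cast_of_lt (by omega)
  have hrne : ((r : ℕ) : ZMod (q ^ 2 - 1)) ≠ 0 := by
    intro h; rw [h, ZMod.val_zero] at hrval; omega
  rcases lt_or_eq_of_le hle with hlt | heq
  · -- r < q - 1 : g r = 0
    have hcr : convPow (deltaFn Fq q 2 1) (q - 1) ((r : ℕ) : ZMod (q ^ 2 - 1)) = 0 := by
      by_contra hne
      obtain ⟨j, hj, hval⟩ := convPow_support q Fq hq (le_refl _) _ hne
      rw [hrval] at hval
      omega
    rw [hg0, deltaFn0_eq, if_neg hrne, hcr, sub_zero] at key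
    exact zero_ne_one key
  · -- r = q - 1 : g r = -1
    subst heq
    have hcr : convPow (deltaFn Fq q 2 1) (q - 1) (((q - 1 : ℕ)) : ZMod (q ^ 2 - 1)) = 1 :=
      convPow_val q Fq hq (le_refl _)
    rw [hg0, deltaFn0_eq, if_neg hrne, hcr, zero_sub] at key
    -- key : -1 = 1
    have h20 : ((2 : ℕ) : Fq) = 0 := by push_cast; linear_combination -key
    have hchar : ringChar Fq = 2 :=
      Or.resolve_left ((Nat.dvd_prime Nat.prime_two).1 (ringChar.dvd h20))
        CharP.ringChar_ne_one
    have := FiniteField.even_card_of_char_two hchar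
    rw [hcard] at this
    obtain ⟨k, hk⟩ := hodd
    omega
end
end
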